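/- arXiv:2502.00209 — 11 statements merged into one kernel-verified Lean document; each statement's English description precedes it below -/
import Mathlib

section
/- Let 𝒟 contain all frames F ⊆ X with |F| ≤ 3. A choice rule c : 𝒟 → X has a FUM representation if and only if c satisfies IIFA (for all F' ⊆ F in 𝒟, if c(F) ∉ F \ F' then c(F) = c(F')). -/
open Finset

noncomputable def UF {X : Type*} [DecidableEq X] (u v : X → ℝ) (F : Finset X) (y : X) : ℝ :=
  u y + (if y ∈ F then v y else 0)

/-!
Necessity: enlarging the frame can only raise frame-dependent utilities, and it leaves the
utility of `c F` unchanged unless `c F` is one of the added elements; so `c F` still beats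
`c F'` in the smaller frame `F'`, and injectivity forces `c F = c F'`.

Sufficiency: let `x₀ = c ∅` and call `x` self-chosen if `c {x} = x`. IIFA applied to `∅`,
singletons, pairs and triples shows that `c F` is `x₀` when `F` contains no self-chosen
element, and otherwise the self-chosen element of `F` that wins every pairwise comparison;
these comparisons are transitive, so counting wins ranks the self-chosen elements. Giving a
framed self-chosen element utility `1 + rank`, the default `x₀` utility `0` and every other
option a distinct negative value represents `c`.
-/

section

variable {X : Type*} [DecidableEq X]

def IsFUMRepresentation (D : Set (Finset X)) (c : Finset X → X) (u v : X → ℝ) : Prop :=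
  (∀ x, 0 ≤ v x) ∧
    ∀ F ∈ D, Function.Injective (UF u v F) ∧ ∀ y, UF u v F y ≤ UF u v F (c F)

def IIFA (D : Set (Finset X)) (c : Finset X → X) : Prop :=
  ∀ F ∈ D, ∀ F' ∈ D, F' ⊆ F → c F ∉ F \ F' → c F = c F'

def IsBestOrDefault (D : Set (Finset X)) (c : Finset X → X) (S : Set X) (g : X → ℕ)
    (x₀ : X) : Prop :=
  ∀ F ∈ D, (c F ∈ F ∧ c F ∈ S ∧ ∀ y ∈ F, y ∈ S → g y ≤ g (c F)) ∨
    ((∀ y ∈ F, y ∉ S) ∧ c F = x₀)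

section UF

variable {u v : X → ℝ} {F F' : Finset X}

lemma UF_le_UF_of_subset (hv : ∀ x, 0 ≤ v x) (h : F' ⊆ F) (y : X) :
    UF u v F' y ≤ UF u v F y := by
  unfold UF
  by_cases hy : y ∈ F'
  · simp [hy, h hy]
  · by_cases hyF : y ∈ F <;> simp [hy, hyF, hv y]

lemma UF_eq_UF_of_notMem_sdiff (h : F' ⊆ F) {y : X} (hy : y ∉ F \ F') :
    UF u v F y = UF u v F' y := by
  have : y ∈ F ↔ y ∈ F' := ⟨fun hF => by simpa [hF] using hy, fun hF' => h hF'⟩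
  simp only [UF, this]

lemma UF_intCast (z w : X → ℤ) (F : Finset X) (y : X) :
    UF (fun x => (z x : ℝ)) (fun x => (w x - z x : ℝ)) F y =
      ((if y ∈ F then w y else z y : ℤ) : ℝ) := by
  unfold UF
  split_ifs <;> push_cast <;> ring

end UF

theorem IsFUMRepresentation.iifa {D : Set (Finset X)} {c : Finset X → X} {u v : X → ℝ}
    (hrep : IsFUMRepresentation D c u v) : IIFA D c := by
  intro F hF F' hF' hsub hcF
  obtain ⟨hinj', hmax'⟩ := hrep.2 F' hF'
  have hbeats : UF u v F' (c F') ≤ UF u v F' (c F) :=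
    calc UF u v F' (c F') ≤ UF u v F (c F') := UF_le_UF_of_subset hrep.1 hsub _
      _ ≤ UF u v F (c F) := (hrep.2 F hF).2 _
      _ = UF u v F' (c F) := UF_eq_UF_of_notMem_sdiff hsub hcF
  exact hinj' (le_antisymm (hmax' _) hbeats)

lemma injective_ite_mem {z w : X → ℤ} (hz : Function.Injective z) (hw : Function.Injective w)
    (hzw : ∀ a b, w a ≠ z b) (F : Finset X) :
    Function.Injective (fun y => if y ∈ F then w y else z y) := by
  intro a b hab
  dsimp only at hab
  split_ifs at hab
  · exact hw hab
  · exact absurd hab (hzw a b)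
  · exact absurd hab.symm (hzw b a)
  · exact hz hab

lemma isFUMRepresentation_of_int {D : Set (Finset X)} {c : Finset X → X} {z w : X → ℤ}
    (hle : ∀ y, z y ≤ w y) (hz : Function.Injective z) (hw : Function.Injective w)
    (hzw : ∀ a b, w a ≠ z b)
    (hmax : ∀ F ∈ D, ∀ y,
      (if y ∈ F then w y else z y) ≤ if c F ∈ F then w (c F) else z (c F)) :
    IsFUMRepresentation D c (fun y => z y) (fun y => w y - z y) := by
  refine ⟨fun y => sub_nonneg.2 (Int.cast_le.2 (hle y)), fun F hF => ?_⟩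
  rw [show UF _ _ F = _ from funext (UF_intCast z w F)]
  exact ⟨Int.cast_injective.comp (injective_ite_mem hz hw hzw F),
    fun y => Int.cast_le.2 (hmax F hF y)⟩

theorem IsBestOrDefault.exists_isFUMRepresentation [Countable X] {D : Set (Finset X)}
    {c : Finset X → X} {S : Set X} {g : X → ℕ} {x₀ : X} (hc : IsBestOrDefault D c S g x₀)
    (hg : Set.InjOn g S) (hx₀ : x₀ ∈ S) : ∃ u v, IsFUMRepresentation D c u v := by
  classical
  obtain ⟨e, he⟩ := Countable.exists_injective_nat X
  -- Off `S` the framed value `w = z + 1` is odd while `z` is always even, so they never collide.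
  set z : X → ℤ := fun y => if y = x₀ then 0 else -(2 * e y + 2)
  set w : X → ℤ := fun y => if y ∈ S then g y + 1 else z y + 1
  have hz_nonpos : ∀ y, z y ≤ 0 := by intro y; simp only [z]; split_ifs <;> omega
  have hw_mem : ∀ y ∈ S, w y = g y + 1 := fun y hy => by simp [w, hy]
  have hw_notMem : ∀ y ∉ S, w y = -(2 * e y + 1) := by
    intro y hy
    have : y ≠ x₀ := by rintro rfl; exact hy hx₀
    simp [w, z, hy, this]; ring
  have hz_inj : Function.Injective z := by
    intro a b hab
    simp only [z] at hab
    split_ifs at hab with ha hb hb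
    · exact ha.trans hb.symm
    · omega
    · omega
    · exact he (by omega)
  refine ⟨_, _, isFUMRepresentation_of_int (z := z) (w := w) (fun y => ?_) hz_inj
    (fun a b hab => ?_) (fun a b => ?_) (fun F hF y => ?_)⟩
  · by_cases hy : y ∈ S
    · have := hz_nonpos y; have := hw_mem y hy; omega
    · simp [w, hy]
  · by_cases ha : a ∈ S <;> by_cases hb : b ∈ S
    · exact hg ha hb (by have := hw_mem a ha; have := hw_mem b hb; omega)
    · have := hw_mem a ha; have := hw_notMem b hb; omega
    · have := hw_notMem a ha; have := hw_mem b hb; omega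
    · exact he (by have := hw_notMem a ha; have := hw_notMem b hb; omega)
  · by_cases ha : a ∈ S
    · have := hw_mem a ha; have := hz_nonpos b; omega
    · rw [hw_notMem a ha]; simp only [z]; split_ifs <;> omega
  rcases hc F hF with ⟨hcF, hcS, hbest⟩ | ⟨hFS, hcF⟩
  · rw [if_pos hcF, hw_mem _ hcS]
    split_ifs with hy
    · by_cases hyS : y ∈ S
      · rw [hw_mem y hyS]; have := hbest y hy hyS; omega
      · have := hw_notMem y hyS; omega
    · have := hz_nonpos y; omega
  · have hx₀F : x₀ ∉ F := fun h => hFS x₀ h hx₀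
    rw [hcF, if_neg hx₀F, show z x₀ = 0 by simp [z]]
    split_ifs with hy
    · have := hw_notMem y (hFS y hy); omega
    · exact hz_nonpos y

def pairwiseWins [Fintype X] (c : Finset X → X) (x : X) : ℕ := #{y | c {x, y} = x}

namespace IIFA

variable {D : Set (Finset X)} {c : Finset X → X}

lemma choice_eq_default_of_notMem (h : IIFA D c) (hD : ∀ F : Finset X, F.card ≤ 3 → F ∈ D)
    {F : Finset X} (hF : F ∈ D) (hcF : c F ∉ F) : c F = c ∅ :=
  h F hF ∅ (hD ∅ (by simp)) (empty_subset F) (by simpa using hcF)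

lemma eq_of_mem_subset (h : IIFA D c) {F F' : Finset X} (hF : F ∈ D) (hF' : F' ∈ D)
    (hsub : F' ⊆ F) (hcF : c F ∈ F') : c F = c F' :=
  h F hF F' hF' hsub (fun hc => (mem_sdiff.1 hc).2 hcF)

lemma selfChosen_default (h : IIFA D c) (hD : ∀ F : Finset X, F.card ≤ 3 → F ∈ D) :
    c {c ∅} = c ∅ := by
  by_contra hne
  exact hne (h.choice_eq_default_of_notMem hD (hD _ (by simp)) (by simpa using hne))

lemma choice_wins_pair (h : IIFA D c) (hD : ∀ F : Finset X, F.card ≤ 3 → F ∈ D)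
    {F : Finset X} (hF : F ∈ D) (hcF : c F ∈ F) {y : X} (hy : y ∈ F) : c {c F, y} = c F :=
  (h.eq_of_mem_subset hF (hD _ (card_le_two.trans (by norm_num)))
    (insert_subset hcF (singleton_subset_iff.2 hy)) (mem_insert_self _ _)).symm

lemma selfChosen_choice_of_mem (h : IIFA D c) (hD : ∀ F : Finset X, F.card ≤ 3 → F ∈ D)
    {F : Finset X} (hF : F ∈ D) (hcF : c F ∈ F) : c {c F} = c F := by
  simpa using h.choice_wins_pair hD hF hcF hcF

lemma choice_mem_of_selfChosen_mem (h : IIFA D c) (hD : ∀ F : Finset X, F.card ≤ 3 → F ∈ D)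
    {F : Finset X} (hF : F ∈ D) {x : X} (hxF : x ∈ F) (hx : c {x} = x) : c F ∈ F := by
  by_contra hcF
  have : c F = c {x} :=
    h F hF {x} (hD _ (by simp)) (singleton_subset_iff.2 hxF) (fun hc => hcF (mem_sdiff.1 hc).1)
  exact hcF (this.trans hx ▸ hxF)

lemma pair_trans (h : IIFA D c) (hD : ∀ F : Finset X, F.card ≤ 3 → F ∈ D) {x y z : X}
    (hx : c {x} = x) (hxy : c {x, y} = x) (hyz : c {y, z} = y) : c {x, z} = x := by
  have hT : ({x, y, z} : Finset X) ∈ D := hD _ card_le_three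
  have hcT := h.choice_mem_of_selfChosen_mem hD hT (mem_insert_self _ _) hx
  have hwins := fun w (hw : w ∈ ({x, y, z} : Finset X)) => h.choice_wins_pair hD hT hcT hw
  simp only [mem_insert, mem_singleton] at hcT
  rcases hcT with hcT | hcT | hcT <;> rw [hcT] at hwins
  · exact hwins z (by simp)
  · have hyx := hwins x (by simp)
    rw [pair_comm, hxy] at hyx
    subst hyx
    exact hyz
  · have hzy := hwins y (by simp)
    rw [pair_comm, hyz] at hzy
    subst hzy
    exact hxy

section Rank

variable [Fintype X]

lemma pairwiseWins_lt (h : IIFA D c) (hD : ∀ F : Finset X, F.card ≤ 3 → F ∈ D) {x y : X}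
    (hx : c {x} = x) (hxy : c {x, y} = x) (hne : x ≠ y) :
    pairwiseWins c y < pairwiseWins c x := by
  refine card_lt_card ⟨fun z hz => ?_, fun hsub => ?_⟩
  · simp only [mem_filter, mem_univ, true_and] at hz ⊢
    exact h.pair_trans hD hx hxy hz
  · have hyx : c {y, x} = y := by
      simpa using hsub (by simpa using hx : x ∈ ({z | c {x, z} = x} : Finset X))
    rw [pair_comm, hxy] at hyx
    exact hne hyx

lemma injOn_pairwiseWins (h : IIFA D c) (hD : ∀ F : Finset X, F.card ≤ 3 → F ∈ D) :
    Set.InjOn (pairwiseWins c) {x | c {x} = x} := by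
  intro x hx y hy hxy
  by_contra hne
  have hmem := h.choice_mem_of_selfChosen_mem hD (hD _ (card_le_two.trans (by norm_num)))
    (mem_insert_self x {y}) hx
  simp only [mem_insert, mem_singleton] at hmem
  rcases hmem with hwin | hwin
  · exact (h.pairwiseWins_lt hD hx hwin hne).ne hxy.symm
  · rw [pair_comm] at hwin
    exact (h.pairwiseWins_lt hD hy hwin (Ne.symm hne)).ne hxy

lemma isBestOrDefault (h : IIFA D c) (hD : ∀ F : Finset X, F.card ≤ 3 → F ∈ D) :
    IsBestOrDefault D c {x | c {x} = x} (pairwiseWins c) (c ∅) := by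
  intro F hF
  by_cases hcF : c F ∈ F
  · refine Or.inl ⟨hcF, h.selfChosen_choice_of_mem hD hF hcF, fun y hy _ => ?_⟩
    rcases eq_or_ne (c F) y with rfl | hne
    · rfl
    · exact (h.pairwiseWins_lt hD (h.selfChosen_choice_of_mem hD hF hcF)
        (h.choice_wins_pair hD hF hcF hy) hne).le
  · exact Or.inr ⟨fun y hy hyS => hcF (h.choice_mem_of_selfChosen_mem hD hF hy hyS),
      h.choice_eq_default_of_notMem hD hF hcF⟩

end Rank

end IIFA

end

/-- Characterization: on a domain `D` containing all frames of size at most 3,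
`c` has a FUM representation iff `c` satisfies IIFA. -/
theorem fum_iff_IIFA {X : Type*} [Fintype X] [DecidableEq X]
    (D : Set (Finset X)) (hD : ∀ F : Finset X, F.card ≤ 3 → F ∈ D)
    (c : Finset X → X) :
    (∃ u v : X → ℝ, (∀ x, 0 ≤ v x) ∧
        ∀ F ∈ D, Function.Injective (UF u v F) ∧ ∀ y : X, UF u v F y ≤ UF u v F (c F)) ↔
      (∀ F ∈ D, ∀ F' ∈ D, F' ⊆ F → c F ∉ F \ F' → c F = c F') := by
  show (∃ u v, IsFUMRepresentation D c u v) ↔ IIFA D c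
  exact ⟨fun ⟨_, _, hrep⟩ => hrep.iifa, fun h =>
    (h.isBestOrDefault hD).exists_isFUMRepresentation (h.injOn_pairwiseWins hD)
      (h.selfChosen_default hD)⟩
end

section
/- For any probabilistic choice rule ρ on a finite set X (a family of probability distributions over X indexed by frames F ⊆ X) and any frame F ⊊ X, the following flow-conservation identity holds: Σ_{a ∈ F} q(a, F) + Σ_{a ∉ F} y(a, F) = Σ_{b ∉ F} q(b, F ∪ {b}), where q(a, F) = Σ_{B ⊇ F} (−1)^{|B \ F|} ρ(a, B) for a ∈ F, and y(a, F) = Σ_{B : F ⊆ B, a ∉ B} (−1)^{|B \ F|} ρ(a, B) for a ∉ F. -/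
open Finset

/-- Block–Marschak polynomial for a framed alternative. -/
noncomputable def qBM {X : Type*} [Fintype X] [DecidableEq X]
    (ρ : X → Finset X → ℝ) (a : X) (F : Finset X) : ℝ :=
  ∑ B ∈ Finset.univ.filter (fun B => F ⊆ B), (-1 : ℝ) ^ (B \ F).card * ρ a B

/-- Auxiliary Block–Marschak polynomial for a non-framed alternative. -/
noncomputable def yBM {X : Type*} [Fintype X] [DecidableEq X]
    (ρ : X → Finset X → ℝ) (a : X) (F : Finset X) : ℝ :=
  ∑ B ∈ Finset.univ.filter (fun B => F ⊆ B ∧ a ∉ B), (-1 : ℝ) ^ (B \ F).card * ρ a B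

lemma sign_sum_zero {X : Type*} [Fintype X] [DecidableEq X]
    (F : Finset X) (hF : F ≠ Finset.univ) :
    ∑ B ∈ Finset.univ.filter (fun B => F ⊆ B), (-1 : ℝ) ^ (B \ F).card = 0 := by
  have h : ∑ B ∈ Finset.univ.filter (fun B => F ⊆ B), (-1 : ℝ) ^ (B \ F).card
      = ∑ S ∈ (Finset.univ \ F).powerset, (-1 : ℝ) ^ S.card := by
    refine Finset.sum_nbij' (fun B => B \ F) (fun S => S ∪ F) ?_ ?_ ?_ ?_ ?_
    · intro B hB
      simp only [mem_powerset]
      exact sdiff_subset_sdiff (subset_univ _) le_rfl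
    · intro S hS
      simp only [mem_powerset, mem_sdiff] at hS
      simp only [mem_filter, mem_univ, true_and]
      exact subset_union_right
    · intro B hB
      simp only [mem_filter, mem_univ, true_and] at hB
      exact sdiff_union_of_subset hB
    · intro S hS
      simp only [mem_powerset] at hS
      show (S ∪ F) \ F = S
      rw [union_sdiff_right, Finset.sdiff_eq_self_iff_disjoint]
      exact Finset.disjoint_left.mpr fun x hx => by
        have := hS hx
        simp only [mem_sdiff] at this
        exact this.2
    · intro B hB; rfl
  rw [h]
  have hne : (Finset.univ \ F).Nonempty := by
    rw [sdiff_nonempty]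
    exact fun hc => hF (Finset.univ_subset_iff.mp hc)
  have h2 := Finset.sum_powerset_neg_one_pow_card_of_nonempty hne
  exact_mod_cast h2

/-- Flow-conservation identity: inflow = outflow + leakages, for every proper frame. -/
theorem flow_conservation {X : Type*} [Fintype X] [DecidableEq X]
    (ρ : X → Finset X → ℝ) (hρ : ∀ F : Finset X, ∑ x, ρ x F = 1)
    (F : Finset X) (hF : F ≠ Finset.univ) :
    ∑ a ∈ F, qBM ρ a F + ∑ a ∈ Finset.univ \ F, yBM ρ a F =
      ∑ b ∈ Finset.univ \ F, qBM ρ b (insert b F) := by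
  -- S a := full signed sum over B ⊇ F
  have key : ∀ a ∈ Finset.univ \ F,
      yBM ρ a F = (∑ B ∈ Finset.univ.filter (fun B => F ⊆ B),
        (-1 : ℝ) ^ (B \ F).card * ρ a B) + qBM ρ a (insert a F) := by
    intro a ha
    simp only [mem_sdiff, mem_univ, true_and] at ha
    have hsplit : (Finset.univ.filter (fun B => F ⊆ B))
        = (Finset.univ.filter (fun B => F ⊆ B ∧ a ∉ B))
          ∪ (Finset.univ.filter (fun B => insert a F ⊆ B)) := by
      ext B
      simp only [mem_filter, mem_union, mem_univ, true_and, insert_subset_iff]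
      by_cases h : a ∈ B <;> tauto
    have hdisj : Disjoint (Finset.univ.filter (fun B => F ⊆ B ∧ a ∉ B))
        (Finset.univ.filter (fun B => insert a F ⊆ B)) := by
      rw [Finset.disjoint_left]
      intro B h1 h2
      simp only [mem_filter, mem_univ, true_and, insert_subset_iff] at h1 h2
      exact h1.2 h2.1
    have hq : ∑ B ∈ Finset.univ.filter (fun B => insert a F ⊆ B),
        (-1 : ℝ) ^ (B \ F).card * ρ a B = - qBM ρ a (insert a F) := by
      rw [qBM, ← Finset.sum_neg_distrib]
      refine Finset.sum_congr rfl fun B hB => ?_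
      simp only [mem_filter, mem_univ, true_and, insert_subset_iff] at hB
      have hcard : (B \ F).card = (B \ insert a F).card + 1 := by
        have : B \ F = insert a (B \ insert a F) := by
          ext x
          simp only [mem_sdiff, mem_insert]
          constructor
          · rintro ⟨hxB, hxF⟩
            by_cases hx : x = a
            · left; exact hx
            · right; exact ⟨hxB, by simp [hx, hxF]⟩
          · rintro (rfl | ⟨hxB, hx⟩)
            · exact ⟨hB.1, ha⟩
            · exact ⟨hxB, fun h => hx (by simp [h])⟩
        rw [this, Finset.card_insert_of_notMem (by simp)]
      rw [hcard]; ring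
    rw [hsplit, Finset.sum_union hdisj, hq, yBM]
    ring
  rw [Finset.sum_congr rfl key, Finset.sum_add_distrib]
  have hSsum : ∑ a ∈ F, qBM ρ a F + ∑ a ∈ Finset.univ \ F,
      (∑ B ∈ Finset.univ.filter (fun B => F ⊆ B),
        (-1 : ℝ) ^ (B \ F).card * ρ a B) = 0 := by
    have hqS : ∀ a ∈ F, qBM ρ a F = ∑ B ∈ Finset.univ.filter (fun B => F ⊆ B),
        (-1 : ℝ) ^ (B \ F).card * ρ a B := fun a _ => rfl
    rw [Finset.sum_congr rfl hqS, ← Finset.sum_union (Finset.disjoint_sdiff),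
      Finset.union_sdiff_of_subset (subset_univ F)]
    rw [Finset.sum_comm]
    have : ∀ B ∈ Finset.univ.filter (fun B => F ⊆ B),
        ∑ a : X, (-1 : ℝ) ^ (B \ F).card * ρ a B = (-1 : ℝ) ^ (B \ F).card := by
      intro B _
      rw [← Finset.mul_sum, hρ B, mul_one]
    rw [Finset.sum_congr rfl this]
    exact sign_sum_zero F hF
  linarith
end

section
/- If a probabilistic choice rule ρ on all frames F ⊆ X has a FRUM representation (i.e., is a μ-mixture of deterministic FUM choice rules), then for every frame F and every a ∈ F the Block-Marschak polynomial q(a,F) = Σ_{B ⊇ F} (−1)^{|B\F|} ρ(a,B) is non-negative, and for every a ∉ F the auxiliary polynomial y(a,F) = Σ_{F ⊆ B ⊆ X\{a}} (−1)^{|B\F|} ρ(a,B) is non-negative. -/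
open Finset

/-- `c` admits a frame-dependent utility (FUM) representation. -/
def IsFUM {X : Type*} [Fintype X] [DecidableEq X] (c : Finset X → X) : Prop :=
  ∃ u v : X → ℝ, (∀ x, 0 ≤ v x) ∧
    ∀ F : Finset X, Function.Injective (UF u v F) ∧ ∀ y : X, UF u v F y ≤ UF u v F (c F)

open Classical in
/-- `ρ` admits a frame-dependent random utility (FRUM) representation. -/
def IsFRUM {X : Type*} [Fintype X] [DecidableEq X] (ρ : X → Finset X → ℝ) : Prop :=
  ∃ μ : (Finset X → X) → ℝ, (∀ c, 0 ≤ μ c) ∧ (∀ c, ¬ IsFUM c → μ c = 0) ∧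
    (∑ c : Finset X → X, μ c) = 1 ∧
    ∀ (x : X) (F : Finset X),
      ρ x F = ∑ c ∈ Finset.univ.filter (fun c : Finset X → X => IsFUM c ∧ c F = x), μ c

lemma pow_sum_real {X : Type*} [DecidableEq X] (s : Finset X) :
    0 ≤ ∑ m ∈ s.powerset, (-1 : ℝ) ^ m.card := by
  have := Finset.sum_powerset_neg_one_pow_card (x := s)
  have h2 : ((∑ m ∈ s.powerset, (-1 : ℤ) ^ m.card : ℤ) : ℝ)
      = ∑ m ∈ s.powerset, (-1 : ℝ) ^ m.card := by push_cast; rfl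
  rw [← h2, this]
  split <;> norm_num

lemma cube_core {X : Type*} [Fintype X] [DecidableEq X] (F T : Finset X) :
    0 ≤ ∑ B ∈ Finset.univ.filter (fun B => F ⊆ B ∧ B ⊆ T), (-1 : ℝ) ^ (B \ F).card := by
  by_cases hFT : F ⊆ T
  · have := pow_sum_real (T \ F)
    rw [show ∑ B ∈ Finset.univ.filter (fun B => F ⊆ B ∧ B ⊆ T), (-1 : ℝ) ^ (B \ F).card
        = ∑ m ∈ (T \ F).powerset, (-1 : ℝ) ^ m.card from ?_]
    · exact this
    refine Finset.sum_nbij' (fun B => B \ F) (fun m => F ∪ m) ?_ ?_ ?_ ?_ ?_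
    · intro B hB
      simp only [mem_filter, mem_univ, true_and] at hB
      simp only [mem_powerset]
      exact sdiff_subset_sdiff hB.2 (le_refl F)
    · intro m hm
      simp only [mem_powerset] at hm
      simp only [mem_filter, mem_univ, true_and]
      exact ⟨subset_union_left, union_subset hFT (hm.trans sdiff_subset)⟩
    · intro B hB
      simp only [mem_filter, mem_univ, true_and] at hB
      exact union_sdiff_of_subset hB.1
    · intro m hm
      simp only [mem_powerset] at hm
      apply union_sdiff_cancel_left
      exact disjoint_of_subset_right hm sdiff_disjoint.symm
    · intro B hB; rfl
  · rw [Finset.filter_false_of_mem, Finset.sum_empty]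
    intro B hB
    rintro ⟨h1, h2⟩
    exact hFT (h1.trans h2)

lemma cube_sum {X : Type*} [Fintype X] [DecidableEq X] (F T : Finset X) :
    0 ≤ ∑ B ∈ Finset.univ.filter (fun B => F ⊆ B),
        (-1 : ℝ) ^ (B \ F).card * (if B ⊆ T then 1 else 0) := by
  classical
  simp only [mul_ite, mul_one, mul_zero]
  rw [← Finset.sum_filter, Finset.filter_filter]
  exact cube_core F T

lemma cube_sum' {X : Type*} [Fintype X] [DecidableEq X] (F T : Finset X) (a : X) (haT : a ∉ T) :
    0 ≤ ∑ B ∈ Finset.univ.filter (fun B => F ⊆ B ∧ a ∉ B),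
        (-1 : ℝ) ^ (B \ F).card * (if B ⊆ T then 1 else 0) := by
  classical
  simp only [mul_ite, mul_one, mul_zero]
  rw [← Finset.sum_filter, Finset.filter_filter]
  rw [show Finset.univ.filter (fun B : Finset X => (F ⊆ B ∧ a ∉ B) ∧ B ⊆ T)
      = Finset.univ.filter (fun B => F ⊆ B ∧ B ⊆ T) from ?_]
  · exact cube_core F T
  apply Finset.filter_congr
  intro B _
  constructor
  · rintro ⟨⟨h1, _⟩, h2⟩; exact ⟨h1, h2⟩
  · rintro ⟨h1, h2⟩; exact ⟨⟨h1, fun haB => haT (h2 haB)⟩, h2⟩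

lemma fum_sum_nonneg_mem {X : Type*} [Fintype X] [DecidableEq X]
    (c : Finset X → X) (hc : IsFUM c) (F : Finset X) (a : X) (ha : a ∈ F) :
    0 ≤ ∑ B ∈ Finset.univ.filter (fun B => F ⊆ B),
        (-1 : ℝ) ^ (B \ F).card * (if c B = a then 1 else 0) := by
  classical
  obtain ⟨u, v, hv, h⟩ := hc
  by_cases hΦ : ∀ y, u y ≤ u a + v a
  · set T := Finset.univ.filter (fun y => u y + v y ≤ u a + v a) with hT
    have key : ∀ B : Finset X, F ⊆ B → (c B = a ↔ B ⊆ T) := by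
      intro B hFB
      have haB : a ∈ B := hFB ha
      constructor
      · intro hcB y hyB
        have hy := (h B).2 y
        rw [hcB] at hy
        simp only [hT, mem_filter, mem_univ, true_and]
        simpa [UF, hyB, haB] using hy
      · intro hBT
        have hmax : ∀ y, UF u v B y ≤ UF u v B a := by
          intro y
          by_cases hyB : y ∈ B
          · have := (Finset.mem_filter.mp (hBT hyB)).2
            simpa [UF, hyB, haB] using this
          · have := hΦ y
            simpa [UF, hyB, haB] using this
        exact (h B).1 (le_antisymm (hmax (c B)) ((h B).2 a))
    calc (0:ℝ) ≤ ∑ B ∈ Finset.univ.filter (fun B => F ⊆ B),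
        (-1 : ℝ) ^ (B \ F).card * (if B ⊆ T then 1 else 0) := cube_sum F T
      _ = _ := by
        apply Finset.sum_congr rfl
        intro B hB
        simp only [mem_filter, mem_univ, true_and] at hB
        exact congrArg _ (if_congr (key B hB).symm rfl rfl)
  · have : ∀ B ∈ Finset.univ.filter (fun B : Finset X => F ⊆ B),
        (-1 : ℝ) ^ (B \ F).card * (if c B = a then 1 else 0) = 0 := by
      intro B hB
      simp only [mem_filter, mem_univ, true_and] at hB
      rw [if_neg, mul_zero]
      intro hcB
      apply hΦ
      intro y
      have hy := (h B).2 y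
      rw [hcB] at hy
      have haB : a ∈ B := hB ha
      have : u y ≤ UF u v B y := by
        unfold UF; split <;> [linarith [hv y]; linarith]
      calc u y ≤ UF u v B y := this
        _ ≤ UF u v B a := hy
        _ = u a + v a := by simp [UF, haB]
    rw [Finset.sum_eq_zero this]

lemma fum_sum_nonneg_notMem {X : Type*} [Fintype X] [DecidableEq X]
    (c : Finset X → X) (hc : IsFUM c) (F : Finset X) (a : X) (ha : a ∉ F) :
    0 ≤ ∑ B ∈ Finset.univ.filter (fun B => F ⊆ B ∧ a ∉ B),
        (-1 : ℝ) ^ (B \ F).card * (if c B = a then 1 else 0) := by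
  classical
  obtain ⟨u, v, hv, h⟩ := hc
  by_cases hΦ : ∀ y, u y ≤ u a
  · set T := (Finset.univ.filter (fun y => u y + v y ≤ u a)).erase a with hT
    have haT : a ∉ T := Finset.notMem_erase a _
    have key : ∀ B : Finset X, F ⊆ B → a ∉ B → (c B = a ↔ B ⊆ T) := by
      intro B hFB haB
      constructor
      · intro hcB y hyB
        have hy := (h B).2 y
        rw [hcB] at hy
        simp only [hT, Finset.mem_erase, mem_filter, mem_univ, true_and]
        refine ⟨fun hya => haB (hya ▸ hyB), ?_⟩
        simpa [UF, hyB, haB] using hy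
      · intro hBT
        have hmax : ∀ y, UF u v B y ≤ UF u v B a := by
          intro y
          by_cases hyB : y ∈ B
          · have := (Finset.mem_filter.mp (Finset.mem_of_mem_erase (hBT hyB))).2
            simpa [UF, hyB, haB] using this
          · have := hΦ y
            simpa [UF, hyB, haB] using this
        exact (h B).1 (le_antisymm (hmax (c B)) ((h B).2 a))
    calc (0:ℝ) ≤ ∑ B ∈ Finset.univ.filter (fun B => F ⊆ B ∧ a ∉ B),
        (-1 : ℝ) ^ (B \ F).card * (if B ⊆ T then 1 else 0) := cube_sum' F T a haT
      _ = _ := by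
        apply Finset.sum_congr rfl
        intro B hB
        simp only [mem_filter, mem_univ, true_and] at hB
        exact congrArg _ (if_congr (key B hB.1 hB.2).symm rfl rfl)
  · have : ∀ B ∈ Finset.univ.filter (fun B : Finset X => F ⊆ B ∧ a ∉ B),
        (-1 : ℝ) ^ (B \ F).card * (if c B = a then 1 else 0) = 0 := by
      intro B hB
      simp only [mem_filter, mem_univ, true_and] at hB
      rw [if_neg, mul_zero]
      intro hcB
      apply hΦ
      intro y
      have hy := (h B).2 y
      rw [hcB] at hy
      have : u y ≤ UF u v B y := by
        unfold UF; split <;> [linarith [hv y]; linarith]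
      calc u y ≤ UF u v B y := this
        _ ≤ UF u v B a := hy
        _ = u a := by simp [UF, hB.2]
    rw [Finset.sum_eq_zero this]

/-- FRUM implies non-negativity of the BM and auxiliary BM polynomials. -/
theorem frum_implies_nonneg_BM {X : Type*} [Fintype X] [DecidableEq X]
    (ρ : X → Finset X → ℝ) (h : IsFRUM ρ) :
    (∀ (F : Finset X) (a : X), a ∈ F → 0 ≤ qBM ρ a F) ∧
      (∀ (F : Finset X) (a : X), a ∉ F → 0 ≤ yBM ρ a F) := by
  classical
  obtain ⟨μ, hμ0, hμsupp, hμ1, hρ⟩ := h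
  constructor
  · intro F a haF
    have hq : qBM ρ a F = ∑ c : Finset X → X, μ c *
        ∑ B ∈ Finset.univ.filter (fun B : Finset X => F ⊆ B),
          (-1 : ℝ) ^ (B \ F).card * (if IsFUM c ∧ c B = a then 1 else 0) := by
      have step : ∀ B, ρ a B = ∑ c : Finset X → X, (if IsFUM c ∧ c B = a then μ c else 0) :=
        fun B => by rw [hρ a B, Finset.sum_filter]
      calc qBM ρ a F
          = ∑ B ∈ Finset.univ.filter (fun B : Finset X => F ⊆ B), ∑ c : Finset X → X,
              (-1 : ℝ) ^ (B \ F).card * (if IsFUM c ∧ c B = a then μ c else 0) := by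
            rw [qBM]
            refine Finset.sum_congr rfl fun B _ => ?_
            rw [step B, Finset.mul_sum]
        _ = ∑ c : Finset X → X, ∑ B ∈ Finset.univ.filter (fun B : Finset X => F ⊆ B),
              (-1 : ℝ) ^ (B \ F).card * (if IsFUM c ∧ c B = a then μ c else 0) :=
            Finset.sum_comm
        _ = _ := by
            refine Finset.sum_congr rfl fun c _ => ?_
            rw [Finset.mul_sum]
            refine Finset.sum_congr rfl fun B _ => ?_
            split <;> ring
    rw [hq]
    apply Finset.sum_nonneg
    intro c _
    by_cases hc : IsFUM c
    · apply mul_nonneg (hμ0 c)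
      have : ∀ B : Finset X, (if IsFUM c ∧ c B = a then (1:ℝ) else 0) = (if c B = a then 1 else 0) := by
        intro B; simp [hc]
      simp_rw [this]
      exact fum_sum_nonneg_mem c hc F a haF
    · rw [hμsupp c hc, zero_mul]
  · intro F a haF
    have hq : yBM ρ a F = ∑ c : Finset X → X, μ c *
        ∑ B ∈ Finset.univ.filter (fun B : Finset X => F ⊆ B ∧ a ∉ B),
          (-1 : ℝ) ^ (B \ F).card * (if IsFUM c ∧ c B = a then 1 else 0) := by
      have step : ∀ B, ρ a B = ∑ c : Finset X → X, (if IsFUM c ∧ c B = a then μ c else 0) :=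
        fun B => by rw [hρ a B, Finset.sum_filter]
      calc yBM ρ a F
          = ∑ B ∈ Finset.univ.filter (fun B : Finset X => F ⊆ B ∧ a ∉ B), ∑ c : Finset X → X,
              (-1 : ℝ) ^ (B \ F).card * (if IsFUM c ∧ c B = a then μ c else 0) := by
            rw [yBM]
            refine Finset.sum_congr rfl fun B _ => ?_
            rw [step B, Finset.mul_sum]
        _ = ∑ c : Finset X → X, ∑ B ∈ Finset.univ.filter (fun B : Finset X => F ⊆ B ∧ a ∉ B),
              (-1 : ℝ) ^ (B \ F).card * (if IsFUM c ∧ c B = a then μ c else 0) :=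
            Finset.sum_comm
        _ = _ := by
            refine Finset.sum_congr rfl fun c _ => ?_
            rw [Finset.mul_sum]
            refine Finset.sum_congr rfl fun B _ => ?_
            split <;> ring
    rw [hq]
    apply Finset.sum_nonneg
    intro c _
    by_cases hc : IsFUM c
    · apply mul_nonneg (hμ0 c)
      have : ∀ B : Finset X, (if IsFUM c ∧ c B = a then (1:ℝ) else 0) = (if c B = a then 1 else 0) := by
        intro B; simp [hc]
      simp_rw [this]
      exact fum_sum_nonneg_notMem c hc F a haF
    · rw [hμsupp c hc, zero_mul]
end

section
/- For a ∉ F ⊆ F' with a ∉ F', define the interim auxiliary polynomial Y(a, F, F') := Σ_{B : F ⊆ B ⊆ F'} (−1)^{|B\F|} ρ(a,B). Then y(a,F) = Y(a, F, X \ {a}), and the non-negativity of y(a,F) for all a ∉ F implies the non-negativity of Y(a, F, F') for all a ∉ F' ⊇ F. In particular, for any x ∈ X \ (F' ∪ {a}), Y(a,F,F') = Y(a, F, F' ∪ {x}) + Y(a, F ∪ {x}, F' ∪ {x}). -/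
open Finset

/-- Interim auxiliary Block–Marschak polynomial. -/
noncomputable def YBM {X : Type*} [Fintype X] [DecidableEq X]
    (ρ : X → Finset X → ℝ) (a : X) (F F' : Finset X) : ℝ :=
  ∑ B ∈ Finset.univ.filter (fun B => F ⊆ B ∧ B ⊆ F'), (-1 : ℝ) ^ (B \ F).card * ρ a B

lemma yBM_eq_YBM' {X : Type*} [Fintype X] [DecidableEq X]
    (ρ : X → Finset X → ℝ) (a : X) (F : Finset X) :
    yBM ρ a F = YBM ρ a F (Finset.univ.erase a) := by
  unfold yBM YBM
  apply Finset.sum_congr _ (fun _ _ => rfl)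
  ext B
  simp [Finset.subset_erase]

lemma YBM_decomp' {X : Type*} [Fintype X] [DecidableEq X]
    (ρ : X → Finset X → ℝ) (a : X) (F F' : Finset X) (x : X)
    (hxF : x ∉ F) (hxF' : x ∉ F') :
    YBM ρ a F F' = YBM ρ a F (insert x F') + YBM ρ a (insert x F) (insert x F') := by
  unfold YBM
  have hsplit : Finset.univ.filter (fun B => F ⊆ B ∧ B ⊆ insert x F')
      = Finset.univ.filter (fun B => F ⊆ B ∧ B ⊆ F')
        ∪ Finset.univ.filter (fun B => insert x F ⊆ B ∧ B ⊆ insert x F') := by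
    ext B
    simp only [mem_union, mem_filter, mem_univ, true_and]
    constructor
    · rintro ⟨hFB, hBx⟩
      by_cases hx : x ∈ B
      · exact Or.inr ⟨insert_subset hx hFB, hBx⟩
      · exact Or.inl ⟨hFB, fun b hb =>
          (mem_insert.1 (hBx hb)).resolve_left (by rintro rfl; exact hx hb)⟩
    · rintro (⟨h1, h2⟩ | ⟨h1, h2⟩)
      · exact ⟨h1, h2.trans (subset_insert _ _)⟩
      · exact ⟨(subset_insert _ _).trans h1, h2⟩
  have hdisj : Disjoint (Finset.univ.filter (fun B => F ⊆ B ∧ B ⊆ F'))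
      (Finset.univ.filter (fun B => insert x F ⊆ B ∧ B ⊆ insert x F')) := by
    rw [Finset.disjoint_left]
    intro B h1 h2
    simp only [mem_filter, mem_univ, true_and] at h1 h2
    exact hxF' (h1.2 (h2.1 (mem_insert_self x F)))
  have hsum2 : ∑ B ∈ Finset.univ.filter (fun B => insert x F ⊆ B ∧ B ⊆ insert x F'),
      (-1 : ℝ) ^ (B \ F).card * ρ a B
      = - ∑ B ∈ Finset.univ.filter (fun B => insert x F ⊆ B ∧ B ⊆ insert x F'),
      (-1 : ℝ) ^ (B \ insert x F).card * ρ a B := by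
    rw [← Finset.sum_neg_distrib]
    apply Finset.sum_congr rfl
    intro B hB
    simp only [mem_filter, mem_univ, true_and] at hB
    have hxB : x ∈ B := hB.1 (mem_insert_self x F)
    have hBF : B \ F = insert x (B \ insert x F) := by
      ext b
      simp only [mem_sdiff, mem_insert]
      constructor
      · rintro ⟨hb, hbF⟩
        by_cases h : b = x
        · exact Or.inl h
        · exact Or.inr ⟨hb, fun h' => h'.elim h hbF⟩
      · rintro (rfl | ⟨hb, hbF⟩)
        · exact ⟨hxB, hxF⟩
        · exact ⟨hb, fun h => hbF (Or.inr h)⟩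
    rw [hBF, Finset.card_insert_of_notMem (by simp)]
    ring
  rw [hsplit, Finset.sum_union hdisj] at *
  rw [hsum2]
  ring

lemma YBM_nonneg' {X : Type*} [Fintype X] [DecidableEq X]
    (ρ : X → Finset X → ℝ)
    (h : ∀ (x : X) (G : Finset X), x ∉ G → 0 ≤ yBM ρ x G) :
    ∀ (n : ℕ) (x : X) (G G' : Finset X), ((Finset.univ.erase x) \ G').card ≤ n →
      G ⊆ G' → x ∉ G' → 0 ≤ YBM ρ x G G' := by
  intro n
  induction n with
  | zero =>
    intro x G G' hcard hGG' hx
    have hsub : Finset.univ.erase x ⊆ G' :=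
      sdiff_eq_empty_iff_subset.1 (card_eq_zero.1 (Nat.le_zero.1 hcard))
    have hG' : G' = Finset.univ.erase x :=
      Finset.Subset.antisymm
        (fun b hb => mem_erase.2 ⟨fun hbx => hx (hbx ▸ hb), mem_univ b⟩) hsub
    rw [hG', ← yBM_eq_YBM']
    exact h x G (fun hxG => hx (hGG' hxG))
  | succ n ih =>
    intro x G G' hcard hGG' hx
    by_cases hE : Finset.univ.erase x ⊆ G'
    · have hG' : G' = Finset.univ.erase x :=
        Finset.Subset.antisymm
          (fun b hb => mem_erase.2 ⟨fun hbx => hx (hbx ▸ hb), mem_univ b⟩) hE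
      rw [hG', ← yBM_eq_YBM']
      exact h x G (fun hxG => hx (hGG' hxG))
    · obtain ⟨z, hz1, hz2⟩ := Finset.not_subset.1 hE
      have hzx : z ≠ x := (mem_erase.1 hz1).1
      have hzG : z ∉ G := fun hg => hz2 (hGG' hg)
      have hxins : x ∉ insert z G' := by
        simp only [mem_insert]
        rintro (rfl | hxx)
        · exact hzx rfl
        · exact hx hxx
      have hzmem : z ∈ Finset.univ.erase x \ G' := mem_sdiff.2 ⟨hz1, hz2⟩
      have hc : (Finset.univ.erase x \ insert z G').card ≤ n := by
        have heq : Finset.univ.erase x \ insert z G'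
            = (Finset.univ.erase x \ G').erase z := by
          ext b
          simp only [mem_sdiff, mem_erase, mem_insert, mem_univ, and_true, true_and]
          tauto
        rw [heq, Finset.card_erase_of_mem hzmem]
        omega
      have h1 := ih x G (insert z G') hc (hGG'.trans (subset_insert _ _)) hxins
      have h2 := ih x (insert z G) (insert z G') hc
        (insert_subset_insert _ hGG') hxins
      rw [YBM_decomp' ρ x G G' z hzG hz2]
      linarith

/-- Interim auxiliary polynomials: `y(a,F) = Y(a,F,X\{a})`, non-negativity of all
`y`'s implies non-negativity of all `Y`'s, and the recursive decomposition. -/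
theorem interim_auxBM {X : Type*} [Fintype X] [DecidableEq X]
    (ρ : X → Finset X → ℝ) (a : X) (F F' : Finset X)
    (hFF' : F ⊆ F') (ha : a ∉ F') :
    yBM ρ a F = YBM ρ a F (Finset.univ.erase a) ∧
    ((∀ (x : X) (G : Finset X), x ∉ G → 0 ≤ yBM ρ x G) →
      ∀ (x : X) (G G' : Finset X), G ⊆ G' → x ∉ G' → 0 ≤ YBM ρ x G G') ∧
    (∀ x : X, x ∉ F' → x ≠ a →
      YBM ρ a F F' = YBM ρ a F (insert x F') + YBM ρ a (insert x F) (insert x F')) := by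
  refine ⟨yBM_eq_YBM' ρ a F,
    fun h x G G' hGG' hx => YBM_nonneg' ρ h _ x G G' le_rfl hGG' hx,
    fun x hx hxa => YBM_decomp' ρ a F F' x (fun hxF => hx (hFF' hxF)) hx⟩
end

section
/- Let μ¹ and μ² be two FRUM representations of the same probabilistic choice rule ρ on 2^X. Then for every F ⊆ X, every b ∉ F, and i ∈ {1,2}: (1) y(b,F) = μⁱ({c ∈ 𝒞_FUM : c(F) = b and c({x}) = x for all x ∉ F}); and (2) q(b, F ∪ {b}) = μⁱ({c ∈ 𝒞_FUM : c(F ∪ {b}) = b and c({x,b}) = x for all x ∉ F ∪ {b}}). -/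
open Finset

open Classical in
/-- Sum of `(-1)^(B\F).card` over the interval `F ⊆ B ⊆ G`. -/
lemma sum_interval_neg_one {X : Type*} [Fintype X] [DecidableEq X]
    (F G : Finset X) (hFG : F ⊆ G) :
    ∑ B ∈ univ.filter (fun B => F ⊆ B ∧ B ⊆ G), (-1 : ℝ) ^ (B \ F).card
      = if G = F then 1 else 0 := by
  have key : ∑ B ∈ univ.filter (fun B => F ⊆ B ∧ B ⊆ G), (-1 : ℝ) ^ (B \ F).card
      = ∑ T ∈ (G \ F).powerset, (-1 : ℝ) ^ T.card := by
    refine Finset.sum_bij' (fun B _ => B \ F) (fun T _ => F ∪ T) ?_ ?_ ?_ ?_ ?_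
    · intro B hB
      simp only [mem_filter, mem_univ, true_and] at hB
      exact Finset.mem_powerset.2 (Finset.sdiff_subset_sdiff hB.2 Finset.Subset.rfl)
    · intro T hT
      have hT' := Finset.mem_powerset.1 hT
      simp only [mem_filter, mem_univ, true_and]
      exact ⟨Finset.subset_union_left,
        Finset.union_subset hFG (hT'.trans Finset.sdiff_subset)⟩
    · intro B hB
      simp only [mem_filter, mem_univ, true_and] at hB
      exact Finset.union_sdiff_of_subset hB.1
    · intro T hT
      have hT' := Finset.mem_powerset.1 hT
      have hd : Disjoint F T := by
        refine Finset.disjoint_left.2 fun a haF haT => ?_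
        exact (Finset.mem_sdiff.1 (hT' haT)).2 haF
      exact Finset.union_sdiff_cancel_left hd
    · intro B hB; rfl
  rw [key]
  have hInt := Finset.sum_powerset_neg_one_pow_card (x := G \ F)
  have hcast : ((∑ m ∈ (G \ F).powerset, (-1 : ℤ) ^ m.card : ℤ) : ℝ)
      = ((if G \ F = ∅ then 1 else 0 : ℤ) : ℝ) := by exact_mod_cast hInt
  push_cast at hcast
  rw [hcast]
  by_cases hGF : G = F
  · rw [if_pos hGF, if_pos (by rw [hGF]; exact Finset.sdiff_self F)]
  · rw [if_neg hGF, if_neg]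
    intro he
    exact hGF (Finset.Subset.antisymm (Finset.sdiff_eq_empty_iff_subset.1 he) hFG)

/-- A FUM choice picks `b` from frame `B` iff `b` strictly maximizes `UF` over `B`. -/
lemma fum_choice_iff {X : Type*} [Fintype X] [DecidableEq X] {c : Finset X → X} {u v : X → ℝ}
    (h : ∀ F : Finset X, Function.Injective (UF u v F) ∧ ∀ y : X, UF u v F y ≤ UF u v F (c F))
    (B : Finset X) (b : X) :
    c B = b ↔ ∀ y, y ≠ b → UF u v B y < UF u v B b := by
  constructor
  · rintro rfl y hy
    exact lt_of_le_of_ne ((h B).2 y) fun e => hy ((h B).1 e)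
  · intro hy
    by_contra hne
    exact absurd ((h B).2 b) (not_le.2 (hy (c B) hne))

open Classical in
lemma inner_y {X : Type*} [Fintype X] [DecidableEq X] {c : Finset X → X} (hc : IsFUM c)
    {F : Finset X} {b : X} (hbF : b ∉ F) :
    ∑ B ∈ univ.filter (fun B => (F ⊆ B ∧ b ∉ B) ∧ c B = b), (-1 : ℝ) ^ (B \ F).card
      = if (c F = b ∧ ∀ x : X, x ∉ F → c {x} = x) then 1 else 0 := by
  obtain ⟨u, v, hv, h⟩ := hc
  have char : ∀ B : Finset X, b ∉ B →
      (c B = b ↔ (∀ y ∈ B, u y + v y < u b) ∧ ∀ y, y ∉ B → y ≠ b → u y < u b) := by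
    intro B hbB
    rw [fum_choice_iff h]
    have hUb : UF u v B b = u b := by simp [UF, hbB]
    constructor
    · intro hall
      refine ⟨fun y hy => ?_, fun y hyB hyb => ?_⟩
      · have hyb : y ≠ b := fun e => hbB (e ▸ hy)
        have := hall y hyb
        rwa [hUb, show UF u v B y = u y + v y by simp [UF, hy]] at this
      · have := hall y hyb
        rwa [hUb, show UF u v B y = u y by simp [UF, hyB]] at this
    · rintro ⟨h1, h2⟩ y hyb
      rw [hUb]
      by_cases hyB : y ∈ B
      · rw [show UF u v B y = u y + v y by simp [UF, hyB]]; exact h1 y hyB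
      · rw [show UF u v B y = u y by simp [UF, hyB]]; exact h2 y hyB hyb
  set A : Finset X := univ.filter (fun y => y ≠ b ∧ u y + v y < u b) with hA
  have hbA : b ∉ A := by simp [hA]
  by_cases hcond : (∀ y ∈ F, u y + v y < u b) ∧ ∀ y, y ∉ F → y ≠ b → u y < u b
  · have hFA : F ⊆ A := by
      intro y hy
      simp only [hA, mem_filter, mem_univ, true_and]
      exact ⟨fun e => hbF (e ▸ hy), hcond.1 y hy⟩
    have hset : univ.filter (fun B => (F ⊆ B ∧ b ∉ B) ∧ c B = b)
        = univ.filter (fun B => F ⊆ B ∧ B ⊆ A) := by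
      ext B
      simp only [mem_filter, mem_univ, true_and]
      constructor
      · rintro ⟨⟨hFB, hbB⟩, hcB⟩
        refine ⟨hFB, fun y hy => ?_⟩
        simp only [hA, mem_filter, mem_univ, true_and]
        exact ⟨fun e => hbB (e ▸ hy), ((char B hbB).1 hcB).1 y hy⟩
      · rintro ⟨hFB, hBA⟩
        have hbB : b ∉ B := fun hb => hbA (hBA hb)
        refine ⟨⟨hFB, hbB⟩, (char B hbB).2 ⟨fun y hy => ?_, fun y hyB hyb => ?_⟩⟩
        · have := hBA hy
          simp only [hA, mem_filter, mem_univ, true_and] at this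
          exact this.2
        · exact hcond.2 y (fun hyF => hyB (hFB hyF)) hyb
    rw [hset, sum_interval_neg_one F A hFA]
    refine if_congr ?_ rfl rfl
    constructor
    · intro hAF
      refine ⟨(char F hbF).2 hcond, fun x hxF => ?_⟩
      rw [fum_choice_iff h]
      intro y hyx
      have hyx' : y ∉ ({x} : Finset X) := by simpa using hyx
      have hUx : UF u v {x} x = u x + v x := by simp [UF]
      have hUy : UF u v {x} y = u y := by simp [UF, hyx']
      rw [hUx, hUy]
      by_cases hxb : x = b
      · subst hxb
        by_cases hyF : y ∈ F
        · calc u y ≤ u y + v y := le_add_of_nonneg_right (hv y)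
            _ < u x := hcond.1 y hyF
            _ ≤ u x + v x := le_add_of_nonneg_right (hv x)
        · calc u y < u x := hcond.2 y hyF hyx
            _ ≤ u x + v x := le_add_of_nonneg_right (hv x)
      · have hxA : x ∉ A := by rw [hAF]; exact hxF
        have hble : u b ≤ u x + v x := by
          by_contra hlt
          refine hxA ?_
          simp only [hA, mem_filter, mem_univ, true_and]
          exact ⟨hxb, not_le.1 hlt⟩
        have hbx : b ∉ ({x} : Finset X) := by
          simp only [Finset.mem_singleton]
          exact fun e => hxb e.symm
        have hne : u b ≠ u x + v x := by
          intro e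
          have e1 : UF u v {x} b = u b := by simp [UF, hbx]
          have e2 : UF u v {x} x = u x + v x := by simp [UF]
          exact hxb (((h {x}).1 (by rw [e1, e2, e])).symm)
        have hblt : u b < u x + v x := lt_of_le_of_ne hble hne
        by_cases hyb : y = b
        · subst hyb; exact hblt
        · by_cases hyF : y ∈ F
          · calc u y ≤ u y + v y := le_add_of_nonneg_right (hv y)
              _ < u b := hcond.1 y hyF
              _ < u x + v x := hblt
          · calc u y < u b := hcond.2 y hyF hyb
              _ < u x + v x := hblt
    · rintro ⟨hcF, hsing⟩
      refine Finset.Subset.antisymm ?_ hFA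
      intro x hxA
      simp only [hA, mem_filter, mem_univ, true_and] at hxA
      obtain ⟨hxb, hxlt⟩ := hxA
      by_contra hxF
      have hcx := hsing x hxF
      rw [fum_choice_iff h] at hcx
      have hb := hcx b (fun e => hxb e.symm)
      have hbx : b ∉ ({x} : Finset X) := by
        simp only [Finset.mem_singleton]
        exact fun e => hxb e.symm
      have e1 : UF u v {x} b = u b := by simp [UF, hbx]
      have e2 : UF u v {x} x = u x + v x := by simp [UF]
      rw [e1, e2] at hb
      linarith
  · have hempty : univ.filter (fun B => (F ⊆ B ∧ b ∉ B) ∧ c B = b) = ∅ := by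
      rw [filter_eq_empty_iff]
      rintro B - ⟨⟨hFB, hbB⟩, hcB⟩
      obtain ⟨h1, h2⟩ := (char B hbB).1 hcB
      refine hcond ⟨fun y hy => h1 y (hFB hy), fun y hyF hyb => ?_⟩
      by_cases hyB : y ∈ B
      · exact lt_of_le_of_lt (le_add_of_nonneg_right (hv y)) (h1 y hyB)
      · exact h2 y hyB hyb
    rw [hempty, sum_empty, if_neg]
    rintro ⟨hcF, -⟩
    exact hcond ((char F hbF).1 hcF)

open Classical in
lemma inner_q {X : Type*} [Fintype X] [DecidableEq X] {c : Finset X → X} (hc : IsFUM c)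
    {F : Finset X} {b : X} (hbF : b ∉ F) :
    ∑ B ∈ univ.filter (fun B => insert b F ⊆ B ∧ c B = b), (-1 : ℝ) ^ (B \ insert b F).card
      = if (c (insert b F) = b ∧ ∀ x : X, x ∉ insert b F → c {x, b} = x) then 1 else 0 := by
  obtain ⟨u, v, hv, h⟩ := hc
  have char : ∀ B : Finset X, b ∈ B →
      (c B = b ↔ (∀ y ∈ B, y ≠ b → u y + v y < u b + v b) ∧ ∀ y, y ∉ B → u y < u b + v b) := by
    intro B hbB
    rw [fum_choice_iff h]
    have hUb : UF u v B b = u b + v b := by simp [UF, hbB]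
    constructor
    · intro hall
      refine ⟨fun y hy hyb => ?_, fun y hyB => ?_⟩
      · have := hall y hyb
        rwa [hUb, show UF u v B y = u y + v y by simp [UF, hy]] at this
      · have hyb : y ≠ b := fun e => hyB (e ▸ hbB)
        have := hall y hyb
        rwa [hUb, show UF u v B y = u y by simp [UF, hyB]] at this
    · rintro ⟨h1, h2⟩ y hyb
      rw [hUb]
      by_cases hyB : y ∈ B
      · rw [show UF u v B y = u y + v y by simp [UF, hyB]]; exact h1 y hyB hyb
      · rw [show UF u v B y = u y by simp [UF, hyB]]; exact h2 y hyB
  set A : Finset X := univ.filter (fun y => y ≠ b ∧ u y + v y < u b + v b) with hA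
  have hbA : b ∉ A := by simp [hA]
  by_cases hcond : (∀ y ∈ F, u y + v y < u b + v b) ∧ ∀ y, y ∉ F → y ≠ b → u y < u b + v b
  · have hFA : F ⊆ A := by
      intro y hy
      simp only [hA, mem_filter, mem_univ, true_and]
      exact ⟨fun e => hbF (e ▸ hy), hcond.1 y hy⟩
    have hFG : insert b F ⊆ insert b A := Finset.insert_subset_insert _ hFA
    have hset : univ.filter (fun B => insert b F ⊆ B ∧ c B = b)
        = univ.filter (fun B => insert b F ⊆ B ∧ B ⊆ insert b A) := by
      ext B
      simp only [mem_filter, mem_univ, true_and]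
      constructor
      · rintro ⟨hFB, hcB⟩
        have hbB : b ∈ B := hFB (Finset.mem_insert_self b F)
        refine ⟨hFB, fun y hy => ?_⟩
        by_cases hyb : y = b
        · rw [hyb]; exact Finset.mem_insert_self b A
        · refine Finset.mem_insert_of_mem ?_
          simp only [hA, mem_filter, mem_univ, true_and]
          exact ⟨hyb, ((char B hbB).1 hcB).1 y hy hyb⟩
      · rintro ⟨hFB, hBA⟩
        have hbB : b ∈ B := hFB (Finset.mem_insert_self b F)
        refine ⟨hFB, (char B hbB).2 ⟨fun y hy hyb => ?_, fun y hyB => ?_⟩⟩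
        · have := hBA hy
          rcases Finset.mem_insert.1 this with e | hyA
          · exact absurd e hyb
          · simp only [hA, mem_filter, mem_univ, true_and] at hyA
            exact hyA.2
        · have hyb : y ≠ b := fun e => hyB (e ▸ hbB)
          have hyF : y ∉ F := fun hyF => hyB (hFB (Finset.mem_insert_of_mem hyF))
          exact hcond.2 y hyF hyb
    rw [hset, sum_interval_neg_one _ _ hFG]
    refine if_congr ?_ rfl rfl
    have hinsiff : insert b A = insert b F ↔ A = F := by
      constructor
      · intro e
        have := congrArg (fun s => Finset.erase s b) e
        simpa [Finset.erase_insert hbA, Finset.erase_insert hbF] using this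
      · intro e; rw [e]
    rw [hinsiff]
    have hbiF : b ∈ insert b F := Finset.mem_insert_self b F
    constructor
    · intro hAF
      refine ⟨(char (insert b F) hbiF).2 ⟨fun y hy hyb => ?_, fun y hyB => ?_⟩, ?_⟩
      · rcases Finset.mem_insert.1 hy with e | hyF
        · exact absurd e hyb
        · exact hcond.1 y hyF
      · have hyb : y ≠ b := fun e => hyB (e ▸ hbiF)
        have hyF : y ∉ F := fun hyF => hyB (Finset.mem_insert_of_mem hyF)
        exact hcond.2 y hyF hyb
      · intro x hxiF
        have hxb : x ≠ b := fun e => hxiF (e ▸ hbiF)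
        have hxF : x ∉ F := fun hxF => hxiF (Finset.mem_insert_of_mem hxF)
        rw [fum_choice_iff h]
        intro y hyx
        have hxmem : x ∈ ({x, b} : Finset X) := by simp
        have hbmem : b ∈ ({x, b} : Finset X) := by simp
        have hUx : UF u v {x, b} x = u x + v x := by simp [UF, hxmem]
        have hUb2 : UF u v {x, b} b = u b + v b := by simp [UF, hbmem]
        have hxA : x ∉ A := by rw [hAF]; exact hxF
        have hble : u b + v b ≤ u x + v x := by
          by_contra hlt
          refine hxA ?_
          simp only [hA, mem_filter, mem_univ, true_and]
          exact ⟨hxb, not_le.1 hlt⟩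
        have hne : u b + v b ≠ u x + v x := by
          intro e
          exact hxb (((h {x, b}).1 (by rw [hUx, hUb2, e])).symm)
        have hblt : u b + v b < u x + v x := lt_of_le_of_ne hble hne
        rw [hUx]
        by_cases hyb : y = b
        · subst hyb; rw [hUb2]; exact hblt
        · have hymem : y ∉ ({x, b} : Finset X) := by simp [hyx, hyb]
          have hUy : UF u v {x, b} y = u y := by simp [UF, hymem]
          rw [hUy]
          by_cases hyF : y ∈ F
          · calc u y ≤ u y + v y := le_add_of_nonneg_right (hv y)
              _ < u b + v b := hcond.1 y hyF
              _ < u x + v x := hblt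
          · calc u y < u b + v b := hcond.2 y hyF hyb
              _ < u x + v x := hblt
    · rintro ⟨hcF, hpair⟩
      refine Finset.Subset.antisymm ?_ hFA
      intro x hxA
      simp only [hA, mem_filter, mem_univ, true_and] at hxA
      obtain ⟨hxb, hxlt⟩ := hxA
      by_contra hxF
      have hxiF : x ∉ insert b F := by
        simp only [Finset.mem_insert]
        exact fun h' => h'.elim hxb hxF
      have hcx := hpair x hxiF
      rw [fum_choice_iff h] at hcx
      have hb := hcx b (fun e => hxb e.symm)
      have hxmem : x ∈ ({x, b} : Finset X) := by simp
      have hbmem : b ∈ ({x, b} : Finset X) := by simp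
      have hUx : UF u v {x, b} x = u x + v x := by simp [UF, hxmem]
      have hUb2 : UF u v {x, b} b = u b + v b := by simp [UF, hbmem]
      rw [hUx, hUb2] at hb
      linarith
  · have hbiF : b ∈ insert b F := Finset.mem_insert_self b F
    have getcond : c (insert b F) = b →
        (∀ y ∈ F, u y + v y < u b + v b) ∧ ∀ y, y ∉ F → y ≠ b → u y < u b + v b := by
      intro hcB
      obtain ⟨h1, h2⟩ := (char (insert b F) hbiF).1 hcB
      refine ⟨fun y hy => h1 y (Finset.mem_insert_of_mem hy) (fun e => hbF (e ▸ hy)),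
        fun y hyF hyb => h2 y ?_⟩
      simp only [Finset.mem_insert]
      exact fun h' => h'.elim hyb hyF
    have hempty : univ.filter (fun B => insert b F ⊆ B ∧ c B = b) = ∅ := by
      rw [filter_eq_empty_iff]
      rintro B - ⟨hFB, hcB⟩
      have hbB : b ∈ B := hFB hbiF
      obtain ⟨h1, h2⟩ := (char B hbB).1 hcB
      refine hcond ⟨fun y hy => h1 y (hFB (Finset.mem_insert_of_mem hy))
        (fun e => hbF (e ▸ hy)), fun y hyF hyb => ?_⟩
      by_cases hyB : y ∈ B
      · exact lt_of_le_of_lt (le_add_of_nonneg_right (hv y)) (h1 y hyB hyb)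
      · exact h2 y hyB
    rw [hempty, sum_empty, if_neg]
    rintro ⟨hcF, -⟩
    exact hcond (getcond hcF)

open Classical in
/-- Uniqueness/identification for FRUM: every FRUM representation `μ` of `ρ`
assigns to the indicated sets of choice types exactly the corresponding
(auxiliary) Block–Marschak polynomial. -/
theorem frum_identification {X : Type*} [Fintype X] [DecidableEq X]
    (ρ : X → Finset X → ℝ) (μ : (Finset X → X) → ℝ)
    (hμ0 : ∀ c, 0 ≤ μ c) (hμsupp : ∀ c, ¬ IsFUM c → μ c = 0)
    (hμ1 : (∑ c : Finset X → X, μ c) = 1)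
    (hμρ : ∀ (x : X) (F : Finset X),
      ρ x F = ∑ c ∈ Finset.univ.filter (fun c : Finset X → X => IsFUM c ∧ c F = x), μ c) :
    ∀ (F : Finset X) (b : X), b ∉ F →
      (yBM ρ b F = ∑ c ∈ Finset.univ.filter
          (fun c : Finset X → X => IsFUM c ∧ c F = b ∧ ∀ x : X, x ∉ F → c {x} = x), μ c) ∧
      (qBM ρ b (insert b F) = ∑ c ∈ Finset.univ.filter
          (fun c : Finset X → X => IsFUM c ∧ c (insert b F) = b ∧
            ∀ x : X, x ∉ insert b F → c {x, b} = x), μ c) := by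
  intro F b hbF
  have step : ∀ (𝔅 : Finset (Finset X)) (G : Finset X)
      (P : (Finset X → X) → Prop),
      (∀ c : Finset X → X, IsFUM c →
        ∑ B ∈ 𝔅.filter (fun B => c B = b), (-1 : ℝ) ^ (B \ G).card
          = if P c then 1 else 0) →
      (∑ B ∈ 𝔅, (-1 : ℝ) ^ (B \ G).card * ρ b B)
        = ∑ c : Finset X → X, (if IsFUM c ∧ P c then μ c else 0) := by
    intro 𝔅 G P hinner
    calc ∑ B ∈ 𝔅, (-1 : ℝ) ^ (B \ G).card * ρ b B
        = ∑ B ∈ 𝔅, ∑ c : Finset X → X,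
            (-1 : ℝ) ^ (B \ G).card * (if IsFUM c ∧ c B = b then μ c else 0) := by
          refine Finset.sum_congr rfl fun B _ => ?_
          rw [hμρ b B, Finset.sum_filter, Finset.mul_sum]
      _ = ∑ c : Finset X → X, ∑ B ∈ 𝔅,
            (-1 : ℝ) ^ (B \ G).card * (if IsFUM c ∧ c B = b then μ c else 0) :=
          Finset.sum_comm
      _ = ∑ c : Finset X → X, (if IsFUM c ∧ P c then μ c else 0) := by
          refine Finset.sum_congr rfl fun c _ => ?_
          by_cases hc : IsFUM c
          · have e1 : ∀ B ∈ 𝔅, (-1 : ℝ) ^ (B \ G).card * (if IsFUM c ∧ c B = b then μ c else 0)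
                = (if c B = b then (-1 : ℝ) ^ (B \ G).card * μ c else 0) := by
              intro B _
              by_cases hB : c B = b
              · rw [if_pos ⟨hc, hB⟩, if_pos hB]
              · rw [if_neg (fun h' => hB h'.2), if_neg hB, mul_zero]
            rw [Finset.sum_congr rfl e1, ← Finset.sum_filter, ← Finset.sum_mul,
              hinner c hc]
            by_cases hP : P c
            · rw [if_pos hP, if_pos ⟨hc, hP⟩, one_mul]
            · rw [if_neg hP, if_neg (fun h' => hP h'.2), zero_mul]
          · rw [if_neg (fun h' => hc h'.1)]
            refine Finset.sum_eq_zero fun B _ => ?_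
            rw [if_neg (fun h' => hc h'.1), mul_zero]
  constructor
  · unfold yBM
    have hstep := step (univ.filter fun B => F ⊆ B ∧ b ∉ B) F
        (fun c => c F = b ∧ ∀ x : X, x ∉ F → c {x} = x) (fun c hc => ?_)
    rw [hstep, Finset.sum_filter]
    · refine Finset.sum_congr rfl fun c _ => ?_
      by_cases hP : IsFUM c ∧ (c F = b ∧ ∀ x : X, x ∉ F → c {x} = x)
      · rw [if_pos hP, if_pos hP]
      · rw [if_neg hP, if_neg hP]
    have hset : (Finset.univ.filter (fun B => F ⊆ B ∧ b ∉ B)).filter (fun B => c B = b)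
        = Finset.univ.filter (fun B => (F ⊆ B ∧ b ∉ B) ∧ c B = b) := by
      ext B
      simp only [Finset.mem_filter, Finset.mem_univ, true_and]
    rw [hset, inner_y hc hbF]
    by_cases hP : c F = b ∧ ∀ x : X, x ∉ F → c {x} = x
    · rw [if_pos hP, if_pos hP]
    · rw [if_neg hP, if_neg hP]
  · unfold qBM
    have hstep := step (univ.filter fun B => insert b F ⊆ B) (insert b F)
        (fun c => c (insert b F) = b ∧ ∀ x : X, x ∉ insert b F → c {x, b} = x)
        (fun c hc => ?_)
    rw [hstep, Finset.sum_filter]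
    · refine Finset.sum_congr rfl fun c _ => ?_
      by_cases hP : IsFUM c ∧ (c (insert b F) = b ∧ ∀ x : X, x ∉ insert b F → c {x, b} = x)
      · rw [if_pos hP, if_pos hP]
      · rw [if_neg hP, if_neg hP]
    have hset : (Finset.univ.filter (fun B => insert b F ⊆ B)).filter (fun B => c B = b)
        = Finset.univ.filter (fun B => insert b F ⊆ B ∧ c B = b) := by
      ext B
      simp only [Finset.mem_filter, Finset.mem_univ, true_and]
    rw [hset, inner_q hc hbF]
    by_cases hP : c (insert b F) = b ∧ ∀ x : X, x ∉ insert b F → c {x, b} = x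
    · rw [if_pos hP, if_pos hP]
    · rw [if_neg hP, if_neg hP]
end

section
/- For any real K > 0 and any non-negative reals k₁, …, k_N, the alternating sum Σ_{A ⊆ {1,…,N}} (−1)^{|A|} · 1/(K + Σ_{i∈A} k_i) is non-negative. -/
open Finset

lemma integral_exp_neg_mul_Ioi_zero {a : ℝ} (ha : 0 < a) :
    ∫ t in Set.Ioi (0 : ℝ), Real.exp (-(a * t)) = 1 / a := by
  have h := MeasureTheory.integral_comp_mul_left_Ioi (fun x => Real.exp (-x)) 0 ha
  simp only [mul_zero, smul_eq_mul, integral_exp_neg_Ioi, neg_zero, Real.exp_zero,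
    mul_one] at h
  rw [h, one_div]

/-- For `K > 0` and non-negative `k i`, the alternating sum
`∑_{A ⊆ {1,…,N}} (−1)^{|A|} / (K + ∑_{i∈A} k i)` is non-negative. -/
theorem alternating_sum_nonneg (N : ℕ) (K : ℝ) (hK : 0 < K)
    (k : Fin N → ℝ) (hk : ∀ i, 0 ≤ k i) :
    0 ≤ ∑ A : Finset (Fin N), (-1 : ℝ) ^ A.card / (K + ∑ i ∈ A, k i) := by
  have hpos : ∀ A : Finset (Fin N), 0 < K + ∑ i ∈ A, k i := by
    intro A
    have : 0 ≤ ∑ i ∈ A, k i := Finset.sum_nonneg fun i _ => hk i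
    linarith
  have key : ∀ A : Finset (Fin N),
      (-1 : ℝ) ^ A.card / (K + ∑ i ∈ A, k i)
        = ∫ t in Set.Ioi (0 : ℝ),
            (-1 : ℝ) ^ A.card * Real.exp (-((K + ∑ i ∈ A, k i) * t)) := by
    intro A
    rw [MeasureTheory.integral_const_mul, integral_exp_neg_mul_Ioi_zero (hpos A)]
    ring
  simp_rw [key]
  rw [← MeasureTheory.integral_finset_sum]
  · apply MeasureTheory.setIntegral_nonneg measurableSet_Ioi
    intro t ht
    have ht' : 0 < t := ht
    have expand : ∑ A : Finset (Fin N),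
        (-1 : ℝ) ^ A.card * Real.exp (-((K + ∑ i ∈ A, k i) * t))
        = Real.exp (-(K * t)) * ∏ i, (-Real.exp (-(k i * t)) + 1) := by
      rw [Finset.prod_add]
      simp only [Finset.prod_const_one, mul_one]
      rw [Finset.mul_sum, ← Finset.powerset_univ]
      apply Finset.sum_congr rfl
      intro A _
      have h1 : ∏ i ∈ A, -Real.exp (-(k i * t))
          = (-1 : ℝ) ^ A.card * ∏ i ∈ A, Real.exp (-(k i * t)) := by
        rw [← Finset.prod_const, ← Finset.prod_mul_distrib]
        simp
      have h2 : ∏ i ∈ A, Real.exp (-(k i * t)) = Real.exp (-((∑ i ∈ A, k i) * t)) := by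
        rw [← Real.exp_sum]
        congr 1
        rw [Finset.sum_mul, ← Finset.sum_neg_distrib]
      rw [h1, h2, mul_left_comm, ← Real.exp_add]
      congr 2
      ring
    rw [expand]
    apply mul_nonneg (Real.exp_pos _).le
    apply Finset.prod_nonneg
    intro i _
    have : Real.exp (-(k i * t)) ≤ 1 :=
      Real.exp_le_one_iff.mpr (by nlinarith [hk i])
    linarith
  · intro A _
    exact ((exp_neg_integrableOn_Ioi 0 (hpos A)).congr_fun
      (fun x _ => by ring_nf) measurableSet_Ioi).const_mul _
end

section
/- If a probabilistic choice rule ρ on 2^X has an F-Luce representation, then for every frame F and every x ∉ F, the auxiliary Block-Marschak polynomial y(x,F) = Σ_{F ⊆ B ⊆ X\{x}} (−1)^{|B\F|} ρ(x,B) equals u(x) · Σ_{A ⊆ X\(F∪{x})} (−1)^{|A|} / (u(X) + v(F) + v(A)), and is therefore non-negative. -/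
open Finset

lemma alt_sum_nonneg {ι : Type*} [DecidableEq ι] (k : ι → ℝ) (hk : ∀ i, 0 ≤ k i) :
    ∀ (S : Finset ι) (K : ℝ), 0 < K →
      0 ≤ ∑ A ∈ S.powerset, (-1:ℝ)^A.card / (K + ∑ i ∈ A, k i) := by
  intro S
  induction S using Finset.strongInduction with
  | _ S ih =>
    intro K hK
    have hpos : ∀ A : Finset ι, 0 < K + ∑ i ∈ A, k i := fun A => by
      have : 0 ≤ ∑ i ∈ A, k i := Finset.sum_nonneg fun i _ => hk i
      linarith
    rcases S.eq_empty_or_nonempty with rfl | hS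
    · simp only [Finset.powerset_empty, Finset.sum_singleton, Finset.card_empty, pow_zero,
        Finset.sum_empty, add_zero]
      positivity
    · have key : K * ∑ A ∈ S.powerset, (-1:ℝ)^A.card / (K + ∑ i ∈ A, k i)
          = ∑ i ∈ S, k i * ∑ A ∈ (S.erase i).powerset,
              (-1:ℝ)^A.card / ((K + k i) + ∑ j ∈ A, k j) := by
        have step1 : K * ∑ A ∈ S.powerset, (-1:ℝ)^A.card / (K + ∑ i ∈ A, k i)
            = ∑ A ∈ S.powerset, ((-1:ℝ)^A.card
                - ∑ i ∈ A, (-1:ℝ)^A.card * (k i / (K + ∑ j ∈ A, k j))) := by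
          rw [Finset.mul_sum]
          refine Finset.sum_congr rfl fun A _ => ?_
          rw [← Finset.mul_sum, ← Finset.sum_div]
          have h0 := (hpos A).ne'
          field_simp
          ring
        rw [step1, Finset.sum_sub_distrib]
        have hz : ∑ A ∈ S.powerset, (-1:ℝ)^A.card = 0 := by
          exact_mod_cast Finset.sum_powerset_neg_one_pow_card_of_nonempty hS
        rw [hz]
        have swap : ∑ A ∈ S.powerset, ∑ i ∈ A, (-1:ℝ)^A.card * (k i / (K + ∑ j ∈ A, k j))
            = ∑ i ∈ S, ∑ A ∈ S.powerset,
                (if i ∈ A then (-1:ℝ)^A.card * (k i / (K + ∑ j ∈ A, k j)) else 0) := by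
          rw [Finset.sum_comm]
          refine Finset.sum_congr rfl fun A hA => ?_
          rw [Finset.sum_ite_mem]
          congr 1
          exact (Finset.inter_eq_right.mpr (Finset.mem_powerset.mp hA)).symm
        rw [swap, zero_sub, ← Finset.sum_neg_distrib]
        refine Finset.sum_congr rfl fun i hi => ?_
        have hiS : i ∉ S.erase i := Finset.notMem_erase i S
        conv_lhs => rw [← Finset.insert_erase hi, Finset.sum_powerset_insert hiS]
        have h1 : ∑ A ∈ (S.erase i).powerset,
            (if i ∈ A then (-1:ℝ)^A.card * (k i / (K + ∑ j ∈ A, k j)) else 0) = 0 := by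
          refine Finset.sum_eq_zero fun A hA => ?_
          rw [if_neg]
          intro hiA
          exact hiS ((Finset.mem_powerset.mp hA) hiA)
        rw [h1, zero_add, Finset.mul_sum, ← Finset.sum_neg_distrib]
        refine Finset.sum_congr rfl fun A hA => ?_
        have hiA : i ∉ A := fun hiA => hiS ((Finset.mem_powerset.mp hA) hiA)
        rw [if_pos (Finset.mem_insert_self i A), Finset.card_insert_of_notMem hiA,
          Finset.sum_insert hiA, pow_succ, add_assoc]
        ring
      have hterms : 0 ≤ ∑ i ∈ S, k i * ∑ A ∈ (S.erase i).powerset,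
          (-1:ℝ)^A.card / ((K + k i) + ∑ j ∈ A, k j) := by
        refine Finset.sum_nonneg fun i hi => ?_
        refine mul_nonneg (hk i) ?_
        exact ih (S.erase i) (Finset.erase_ssubset hi) (K + k i) (by have := hk i; linarith)
      rw [← key] at hterms
      exact nonneg_of_mul_nonneg_right hterms hK

/-- `(u,v)` is an F-Luce representation of `ρ` (on all frames). -/
def IsFLuce {X : Type*} [Fintype X] [DecidableEq X]
    (ρ : X → Finset X → ℝ) (u v : X → ℝ) : Prop :=
  (∀ x, 0 < u x) ∧ (∀ x, 0 ≤ v x) ∧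
    ∀ (F : Finset X) (x : X),
      ρ x F = (u x + if x ∈ F then v x else 0) / ((∑ z, u z) + ∑ z ∈ F, v z)

/-- For F-Luce data, the auxiliary BM polynomial has the alternating-sum form
and is non-negative. -/
theorem fLuce_auxBM {X : Type*} [Fintype X] [DecidableEq X]
    (ρ : X → Finset X → ℝ) (u v : X → ℝ) (h : IsFLuce ρ u v) :
    ∀ (F : Finset X) (x : X), x ∉ F →
      (yBM ρ x F = u x * ∑ A ∈ (Finset.univ \ insert x F).powerset,
          (-1 : ℝ) ^ A.card / ((∑ z, u z) + (∑ z ∈ F, v z) + ∑ z ∈ A, v z)) ∧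
      0 ≤ yBM ρ x F := by
  obtain ⟨hu, hv, hρ⟩ := h
  intro F x hxF
  have hU : 0 < ∑ z, u z :=
    Finset.sum_pos (fun z _ => hu z) ⟨x, Finset.mem_univ x⟩
  have hK : 0 < (∑ z, u z) + ∑ z ∈ F, v z :=
    add_pos_of_pos_of_nonneg hU (Finset.sum_nonneg fun z _ => hv z)
  have heq : yBM ρ x F = u x * ∑ A ∈ (Finset.univ \ insert x F).powerset,
      (-1 : ℝ) ^ A.card / ((∑ z, u z) + (∑ z ∈ F, v z) + ∑ z ∈ A, v z) := by
    unfold yBM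
    rw [Finset.mul_sum]
    refine Finset.sum_bij' (fun B _ => B \ F) (fun A _ => F ∪ A) ?_ ?_ ?_ ?_ ?_
    · intro B hB
      obtain ⟨hFB, hxB⟩ := (Finset.mem_filter.mp hB).2
      rw [Finset.mem_powerset]
      intro z hz
      rw [Finset.mem_sdiff] at hz ⊢
      refine ⟨Finset.mem_univ z, ?_⟩
      rw [Finset.mem_insert]
      rintro (rfl | hzF)
      exacts [hxB hz.1, hz.2 hzF]
    · intro A hA
      rw [Finset.mem_powerset] at hA
      rw [Finset.mem_filter]
      refine ⟨Finset.mem_univ _, Finset.subset_union_left, ?_⟩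
      rw [Finset.mem_union]
      rintro (hx | hx)
      · exact hxF hx
      · exact ((Finset.mem_sdiff.mp (hA hx)).2) (Finset.mem_insert_self x F)
    · intro B hB
      exact Finset.union_sdiff_of_subset (Finset.mem_filter.mp hB).2.1
    · intro A hA
      rw [Finset.mem_powerset] at hA
      refine Finset.union_sdiff_cancel_left ?_
      rw [Finset.disjoint_left]
      intro z hzF hzA
      exact (Finset.mem_sdiff.mp (hA hzA)).2 (Finset.mem_insert_of_mem hzF)
    · intro B hB
      obtain ⟨hFB, hxB⟩ := (Finset.mem_filter.mp hB).2
      rw [hρ B x, if_neg hxB, add_zero, ← Finset.sum_sdiff hFB]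
      ring
  refine ⟨heq, ?_⟩
  rw [heq]
  refine mul_nonneg (hu x).le ?_
  have := alt_sum_nonneg v hv (Finset.univ \ insert x F) ((∑ z, u z) + ∑ z ∈ F, v z) hK
  simpa [add_assoc] using this
end

section
/- Every probabilistic choice rule ρ with an F-Luce representation satisfies Strong Luce-IIA: for all x, y not in the symmetric difference F Δ F', ρ(x,F)/ρ(x,F') = ρ(y,F)/ρ(y,F'); and F-Regularity: for all x ∉ F and any y, ρ(x,F) ≤ ρ(x, F \ {y}). -/
open Finset

/-- Every F-Luce choice rule satisfies Strong Luce-IIA and F-Regularity. -/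
theorem fLuce_strongIIA_and_regularity {X : Type*} [Fintype X] [DecidableEq X]
    (ρ : X → Finset X → ℝ) (u v : X → ℝ) (h : IsFLuce ρ u v) :
    (∀ (F F' : Finset X) (x y : X), x ∉ symmDiff F F' → y ∉ symmDiff F F' →
      ρ x F / ρ x F' = ρ y F / ρ y F') ∧
    (∀ (F : Finset X) (x y : X), x ∉ F → ρ x F ≤ ρ x (F.erase y)) := by

  obtain ⟨hu, hv, hρ⟩ := h
  have hD : ∀ (x : X) (F : Finset X), 0 < (∑ z, u z) + ∑ z ∈ F, v z := by
    intro x F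
    have h1 : 0 < ∑ z, u z := Finset.sum_pos (fun z _ => hu z) ⟨x, Finset.mem_univ x⟩
    have h2 : 0 ≤ ∑ z ∈ F, v z := Finset.sum_nonneg fun z _ => hv z
    linarith
  have hnum : ∀ (x : X) (F : Finset X), 0 < u x + (if x ∈ F then v x else 0) := by
    intro x F
    have := hu x; have := hv x
    split <;> linarith
  constructor
  · intro F F' x y hx hy
    have key : ∀ z : X, z ∉ symmDiff F F' →
        ρ z F / ρ z F' = ((∑ w, u w) + ∑ w ∈ F', v w) / ((∑ w, u w) + ∑ w ∈ F, v w) := by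
      intro z hz
      have hiff : z ∈ F ↔ z ∈ F' := by
        simp [Finset.mem_symmDiff] at hz; tauto
      have heq : (if z ∈ F then v z else 0) = (if z ∈ F' then v z else 0) := by
        simp [hiff]
      rw [hρ, hρ, heq]
      have hn := hnum z F'
      have hd1 := hD z F
      have hd2 := hD z F'
      field_simp
    rw [key x hx, key y hy]
  · intro F x y hxF
    have hx' : x ∉ F.erase y := fun hc => hxF (Finset.mem_of_mem_erase hc)
    rw [hρ, hρ, if_neg hxF, if_neg hx']
    have hle : (∑ z ∈ F.erase y, v z) ≤ ∑ z ∈ F, v z :=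
      Finset.sum_le_sum_of_subset_of_nonneg (Finset.erase_subset _ _) (fun z _ _ => hv z)
    have hd := hD x (F.erase y)
    gcongr
    · have := hu x; linarith
end

section
/- Let |X| ≥ 3 and let 𝒟 contain all frames of size at most 2. A probabilistic choice rule ρ on 𝒟 with strictly positive probabilities has an F-Luce representation if and only if ρ satisfies Strong Luce-IIA (for x, y ∉ F Δ F', ρ(x,F)/ρ(x,F') = ρ(y,F)/ρ(y,F')) and F-Regularity (for x ∉ F, ρ(x,F) ≤ ρ(x, F\{y}) for the frames in 𝒟). -/
open Finset

/-!
Necessity is a direct computation: outside `F Δ F'` the numerators of an F-Luce rule agree, so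
`ρ(x,F)/ρ(x,F')` is the ratio of the two denominators, and erasing an element of `F` only
shrinks the denominator.

For sufficiency take `u = ρ(·,∅)`. Strong Luce-IIA against `∅` makes `ρ(·,F)` a fixed multiple
`c_F` of `u` outside `F`; since `|F| ≤ 2 < |X|` there is a witness `x ∉ F`, and IIA between `F`
and `{a}` through `x` shows that `ρ(a,F)/c_F = ρ(a,{a})/c_{a}` for `a ∈ F`. Calling this
quantity `u(a) + v(a)`, every `ρ(·,F)` is `c_F` times the F-Luce weights, and summing to one
fixes `c_F = 1/(u(X) + v(F))`. Finally F-Regularity for singletons gives `c_{a} ≤ 1`, that is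
`v(a) ≥ 0`.
-/

section

variable {X : Type*} [Fintype X]

lemma sum_add_sum_pos [Nonempty X] {u v : X → ℝ} (hu : ∀ x, 0 < u x) (hv : ∀ x, 0 ≤ v x)
    (F : Finset X) : 0 < (∑ z, u z) + ∑ z ∈ F, v z :=
  add_pos_of_pos_of_nonneg (sum_pos (fun z _ => hu z) univ_nonempty) (sum_nonneg fun z _ => hv z)

variable [DecidableEq X]

noncomputable def fLuce (u v : X → ℝ) (x : X) (F : Finset X) : ℝ :=
  (u x + if x ∈ F then v x else 0) / ((∑ z, u z) + ∑ z ∈ F, v z)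

def StrongLuceIIA (ρ : X → Finset X → ℝ) : Prop :=
  ∀ F F' : Finset X, F.card ≤ 2 → F'.card ≤ 2 → ∀ x y : X,
    x ∉ symmDiff F F' → y ∉ symmDiff F F' → ρ x F / ρ x F' = ρ y F / ρ y F'

def FRegular (ρ : X → Finset X → ℝ) : Prop :=
  ∀ F : Finset X, F.card ≤ 2 → ∀ x y : X, x ∉ F → ρ x F ≤ ρ x (F.erase y)

section Necessity

variable {u v : X → ℝ}

lemma fLuce_div_fLuce (hu : ∀ x, 0 < u x) (hv : ∀ x, 0 ≤ v x) {F F' : Finset X} {x : X}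
    (hx : x ∉ symmDiff F F') :
    fLuce u v x F / fLuce u v x F' =
      ((∑ z, u z) + ∑ z ∈ F', v z) / ((∑ z, u z) + ∑ z ∈ F, v z) := by
  have : Nonempty X := ⟨x⟩
  have hmem : x ∈ F ↔ x ∈ F' := by
    simp only [mem_symmDiff] at hx
    tauto
  have hnum : 0 < u x + if x ∈ F' then v x else 0 := by
    split_ifs
    · linarith [hu x, hv x]
    · linarith [hu x]
  have hD := sum_add_sum_pos hu hv F
  have hD' := sum_add_sum_pos hu hv F'
  simp only [fLuce, hmem]
  field_simp

lemma strongLuceIIA_fLuce (hu : ∀ x, 0 < u x) (hv : ∀ x, 0 ≤ v x) :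
    StrongLuceIIA (fLuce u v) := by
  intro F F' _ _ x y hx hy
  rw [fLuce_div_fLuce hu hv hx, fLuce_div_fLuce hu hv hy]

lemma fLuce_le_fLuce_of_subset (hu : ∀ x, 0 < u x) (hv : ∀ x, 0 ≤ v x) {F G : Finset X}
    (hGF : G ⊆ F) {x : X} (hx : x ∉ F) : fLuce u v x F ≤ fLuce u v x G := by
  have : Nonempty X := ⟨x⟩
  have hxG : x ∉ G := fun h => hx (hGF h)
  simp only [fLuce, if_neg hx, if_neg hxG, add_zero]
  have := sum_add_sum_pos hu hv G
  gcongr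
  · exact (hu x).le
  · exact fun z _ _ => hv z

lemma fRegular_fLuce (hu : ∀ x, 0 < u x) (hv : ∀ x, 0 ≤ v x) : FRegular (fLuce u v) :=
  fun _ _ _ _ hx => fLuce_le_fLuce_of_subset hu hv (erase_subset _ _) hx

end Necessity

section Sufficiency

variable {ρ : X → Finset X → ℝ}

/-- Under Strong Luce-IIA, `ρ(·, F)` is a constant multiple of `ρ(·, ∅)` outside `F`;
this is that constant, read off from the total mass outside `F`. -/
noncomputable def scale (ρ : X → Finset X → ℝ) (F : Finset X) : ℝ :=
  (∑ x ∈ Fᶜ, ρ x F) / ∑ x ∈ Fᶜ, ρ x ∅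

lemma StrongLuceIIA.eq_scale_mul (h : StrongLuceIIA ρ) (h₀ : ∀ x, 0 < ρ x ∅) {F : Finset X}
    (hF : F.card ≤ 2) {x : X} (hx : x ∉ F) : ρ x F = scale ρ F * ρ x ∅ := by
  have hIIA : ∀ y, y ∉ F → ρ y F / ρ y ∅ = ρ x F / ρ x ∅ := fun y hy =>
    h F ∅ hF (by simp) y x (by simpa [mem_symmDiff] using hy) (by simpa [mem_symmDiff] using hx)
  have hy : ∀ y ∈ Fᶜ, ρ y F = ρ x F / ρ x ∅ * ρ y ∅ := fun y hy => by
    rw [← hIIA y (mem_compl.1 hy), div_mul_cancel₀ _ (h₀ y).ne']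
  have hpos : 0 < ∑ y ∈ Fᶜ, ρ y ∅ := sum_pos (fun y _ => h₀ y) ⟨x, mem_compl.2 hx⟩
  rw [scale, sum_congr rfl hy, ← mul_sum, mul_div_cancel_right₀ _ hpos.ne',
    div_mul_cancel₀ _ (h₀ x).ne']

lemma StrongLuceIIA.eq_scale_mul_of_mem (h : StrongLuceIIA ρ)
    (hpos : ∀ x (F : Finset X), F.card ≤ 2 → 0 < ρ x F) {F : Finset X} (hF : F.card ≤ 2)
    (hFX : F.card < Fintype.card X) {a : X} (ha : a ∈ F) :
    ρ a F = scale ρ F * (ρ a {a} / scale ρ {a}) := by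
  obtain ⟨x, -, hx⟩ := exists_mem_notMem_of_card_lt_card (s := F) (t := univ) (by simpa)
  have hxa : x ≠ a := fun hxa => hx (hxa ▸ ha)
  have h₀ : ∀ y, 0 < ρ y ∅ := fun y => hpos y ∅ (by simp)
  have ha1 : ({a} : Finset X).card ≤ 2 := by simp
  have hxF := h.eq_scale_mul h₀ hF hx
  have hxa1 := h.eq_scale_mul h₀ ha1 (notMem_singleton.2 hxa)
  have hIIA := h F {a} hF ha1 a x (by simp [mem_symmDiff, ha]) (by simp [mem_symmDiff, hx, hxa])
  have hρa := hpos a {a} ha1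
  have hρx := hpos x {a} ha1
  have hc : scale ρ {a} ≠ 0 := by
    rintro hc
    rw [hc, zero_mul] at hxa1
    linarith
  rw [div_eq_div_iff hρa.ne' hρx.ne', hxF, hxa1] at hIIA
  field_simp
  apply mul_right_cancel₀ (h₀ x).ne'
  linear_combination hIIA

/-- The `v` of the representation, recovered from the singleton frame `{a}`. -/
noncomputable def luceBonus (ρ : X → Finset X → ℝ) (a : X) : ℝ :=
  ρ a {a} / scale ρ {a} - ρ a ∅

lemma StrongLuceIIA.eq_scale_mul_weight (h : StrongLuceIIA ρ)
    (hpos : ∀ x (F : Finset X), F.card ≤ 2 → 0 < ρ x F) (hX : 3 ≤ Fintype.card X)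
    {F : Finset X} (hF : F.card ≤ 2) (x : X) :
    ρ x F = scale ρ F * (ρ x ∅ + if x ∈ F then luceBonus ρ x else 0) := by
  split_ifs with hx
  · rw [h.eq_scale_mul_of_mem hpos hF (by omega) hx, luceBonus, add_sub_cancel]
  · rw [add_zero, h.eq_scale_mul (fun y => hpos y ∅ (by simp)) hF hx]

lemma StrongLuceIIA.scale_mul_eq_one (h : StrongLuceIIA ρ)
    (hpos : ∀ x (F : Finset X), F.card ≤ 2 → 0 < ρ x F)
    (hsum : ∀ F : Finset X, F.card ≤ 2 → ∑ x, ρ x F = 1) (hX : 3 ≤ Fintype.card X)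
    {F : Finset X} (hF : F.card ≤ 2) :
    scale ρ F * ((∑ z, ρ z ∅) + ∑ z ∈ F, luceBonus ρ z) = 1 := by
  calc scale ρ F * ((∑ z, ρ z ∅) + ∑ z ∈ F, luceBonus ρ z)
      = ∑ z, scale ρ F * (ρ z ∅ + if z ∈ F then luceBonus ρ z else 0) := by
        rw [← mul_sum, sum_add_distrib, sum_ite_mem, univ_inter]
    _ = ∑ z, ρ z F := sum_congr rfl fun z _ => (h.eq_scale_mul_weight hpos hX hF z).symm
    _ = 1 := hsum F hF

lemma luceBonus_nonneg (h : StrongLuceIIA ρ) (hreg : FRegular ρ)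
    (hpos : ∀ x (F : Finset X), F.card ≤ 2 → 0 < ρ x F)
    (hsum : ∀ F : Finset X, F.card ≤ 2 → ∑ x, ρ x F = 1) (hX : 3 ≤ Fintype.card X) (a : X) :
    0 ≤ luceBonus ρ a := by
  obtain ⟨x, -, hx⟩ := exists_mem_notMem_of_card_lt_card (s := {a}) (t := univ) (by simp; omega)
  have ha1 : ({a} : Finset X).card ≤ 2 := by simp
  have hnorm := h.scale_mul_eq_one hpos hsum hX ha1
  rw [hsum ∅ (by simp), sum_singleton] at hnorm
  have hxa := h.eq_scale_mul (fun y => hpos y ∅ (by simp)) ha1 hx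
  have hle := hreg {a} ha1 x a hx
  rw [erase_singleton, hxa] at hle
  have hρx := hpos x {a} ha1
  have hρx₀ := hpos x ∅ (by simp)
  have hc : 0 < scale ρ {a} := pos_of_mul_pos_left (hxa ▸ hρx) hρx₀.le
  have hc1 : scale ρ {a} ≤ 1 := (mul_le_iff_le_one_left hρx₀).1 hle
  nlinarith

theorem exists_fLuce_of_strongLuceIIA_of_fRegular (hX : 3 ≤ Fintype.card X)
    (hpos : ∀ x (F : Finset X), F.card ≤ 2 → 0 < ρ x F)
    (hsum : ∀ F : Finset X, F.card ≤ 2 → ∑ x, ρ x F = 1)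
    (h : StrongLuceIIA ρ) (hreg : FRegular ρ) :
    ∃ u v : X → ℝ, (∀ x, 0 < u x) ∧ (∀ x, 0 ≤ v x) ∧
      ∀ F : Finset X, F.card ≤ 2 → ∀ x, ρ x F = fLuce u v x F := by
  refine ⟨fun x => ρ x ∅, luceBonus ρ, fun x => hpos x ∅ (by simp),
    luceBonus_nonneg h hreg hpos hsum hX, fun F hF x => ?_⟩
  have hnorm := h.scale_mul_eq_one hpos hsum hX hF
  rw [fLuce, eq_div_iff (right_ne_zero_of_mul_eq_one hnorm), h.eq_scale_mul_weight hpos hX hF x]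
  linear_combination (ρ x ∅ + if x ∈ F then luceBonus ρ x else 0) * hnorm

end Sufficiency

end

/-- Characterization of F-Luce on the domain of frames of size at most 2,
for at least three alternatives: an F-Luce representation exists iff the data
satisfy Strong Luce-IIA and F-Regularity. -/
theorem fLuce_characterization {X : Type*} [Fintype X] [DecidableEq X]
    (hX : 3 ≤ Fintype.card X)
    (ρ : X → Finset X → ℝ)
    (hpos : ∀ (x : X) (F : Finset X), F.card ≤ 2 → 0 < ρ x F)
    (hsum : ∀ F : Finset X, F.card ≤ 2 → ∑ x, ρ x F = 1) :
    (∃ u v : X → ℝ, (∀ x, 0 < u x) ∧ (∀ x, 0 ≤ v x) ∧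
        ∀ (F : Finset X), F.card ≤ 2 → ∀ x : X,
          ρ x F = (u x + if x ∈ F then v x else 0) / ((∑ z, u z) + ∑ z ∈ F, v z)) ↔
      ((∀ (F F' : Finset X), F.card ≤ 2 → F'.card ≤ 2 → ∀ x y : X,
          x ∉ symmDiff F F' → y ∉ symmDiff F F' →
          ρ x F / ρ x F' = ρ y F / ρ y F') ∧
        (∀ (F : Finset X), F.card ≤ 2 → ∀ x y : X, x ∉ F →
          ρ x F ≤ ρ x (F.erase y))) := by
  constructor
  · rintro ⟨u, v, hu, hv, hρ⟩
    refine ⟨fun F F' hF hF' x y hx hy => ?_, fun F hF x y hx => ?_⟩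
    · simp only [hρ F hF, hρ F' hF']
      exact strongLuceIIA_fLuce hu hv F F' hF hF' x y hx hy
    · rw [hρ F hF, hρ _ (card_erase_le.trans hF)]
      exact fRegular_fLuce hu hv F hF x y hx
  · rintro ⟨hIIA, hreg⟩
    exact exists_fLuce_of_strongLuceIIA_of_fRegular hX hpos hsum hIIA hreg
end

section
/- If (u₁, v₁) and (u₂, v₂) are two F-Luce representations of the same strictly positive probabilistic choice rule ρ on all frames including ∅ and all singletons, then there exists α > 0 with u₁ = α·u₂ and v₁ = α·v₂. -/
/-!
On the empty frame `ρ(x, ∅) = u(x) / u(X)`, so the normalised utility `u / u(X)` is read off `ρ`.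
For `x ≠ y` the frame `{y}` only changes the denominator, and
`ρ(x, ∅) / ρ(x, {y}) = 1 + v(y) / u(X)`, so `v / u(X)` is read off `ρ` as well.
Hence two representations agree up to the factor `α = u₁(X) / u₂(X)`.
-/

open Finset

namespace FLuce

variable {X : Type*} [Fintype X] [DecidableEq X]

noncomputable def choiceProb (u v : X → ℝ) (F : Finset X) (x : X) : ℝ :=
  (u x + if x ∈ F then v x else 0) / ((∑ z, u z) + ∑ z ∈ F, v z)

def IsRepOn (D : Set (Finset X)) (ρ : X → Finset X → ℝ) (u v : X → ℝ) : Prop :=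
  ∀ F ∈ D, ∀ x, ρ x F = choiceProb u v F x

theorem choiceProb_empty (u v : X → ℝ) (x : X) :
    choiceProb u v ∅ x = u x / ∑ z, u z := by
  simp [choiceProb]

theorem choiceProb_singleton_of_ne (u v : X → ℝ) {x y : X} (hxy : x ≠ y) :
    choiceProb u v {y} x = u x / ((∑ z, u z) + v y) := by
  simp [choiceProb, hxy]

theorem choiceProb_empty_div_singleton {u : X → ℝ} (hu : ∀ x, 0 < u x) (v : X → ℝ)
    {x y : X} (hv : 0 ≤ v y) (hxy : x ≠ y) :
    choiceProb u v ∅ x / choiceProb u v {y} x = 1 + v y / ∑ z, u z := by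
  have hU : 0 < ∑ z, u z := sum_pos (fun z _ ↦ hu z) ⟨x, mem_univ x⟩
  rw [choiceProb_empty, choiceProb_singleton_of_ne u v hxy]
  field_simp [(hu x).ne', (add_pos_of_pos_of_nonneg hU hv).ne']

variable {D : Set (Finset X)} {ρ : X → Finset X → ℝ} {u v : X → ℝ}

theorem IsRepOn.div_sum_eq (h : IsRepOn D ρ u v) (hD : ∅ ∈ D) (x : X) :
    u x / ∑ z, u z = ρ x ∅ := by
  rw [h ∅ hD, choiceProb_empty]

theorem IsRepOn.div_sum_eq_sub_one (h : IsRepOn D ρ u v) (hD₀ : ∅ ∈ D) {x y : X}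
    (hD₁ : {y} ∈ D) (hu : ∀ x, 0 < u x) (hv : 0 ≤ v y) (hxy : x ≠ y) :
    v y / ∑ z, u z = ρ x ∅ / ρ x {y} - 1 := by
  rw [h ∅ hD₀, h {y} hD₁, choiceProb_empty_div_singleton hu v hv hxy]
  ring

end FLuce

theorem eq_div_mul_of_div_eq_div {K : Type*} [Field K] {a b A B : K} (hA : A ≠ 0)
    (h : a / A = b / B) : a = A / B * b := by
  rw [div_mul_comm, ← h, div_mul_cancel₀ a hA]

open FLuce in
theorem fLuce_uniqueness_general {X : Type*} [Fintype X] [DecidableEq X]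
    (hX : 2 ≤ Fintype.card X)
    (ρ : X → Finset X → ℝ)
    (u₁ v₁ u₂ v₂ : X → ℝ)
    (hu₁ : ∀ x, 0 < u₁ x) (hv₁ : ∀ x, 0 ≤ v₁ x)
    (hu₂ : ∀ x, 0 < u₂ x) (hv₂ : ∀ x, 0 ≤ v₂ x)
    (h₁ : ∀ (F : Finset X), F.card ≤ 1 → ∀ x : X,
      ρ x F = (u₁ x + if x ∈ F then v₁ x else 0) / ((∑ z, u₁ z) + ∑ z ∈ F, v₁ z))
    (h₂ : ∀ (F : Finset X), F.card ≤ 1 → ∀ x : X,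
      ρ x F = (u₂ x + if x ∈ F then v₂ x else 0) / ((∑ z, u₂ z) + ∑ z ∈ F, v₂ z)) :
    ∃ α : ℝ, 0 < α ∧ (∀ x, u₁ x = α * u₂ x) ∧ (∀ x, v₁ x = α * v₂ x) := by
  have rep₁ : IsRepOn {F | F.card ≤ 1} ρ u₁ v₁ := h₁
  have rep₂ : IsRepOn {F | F.card ≤ 1} ρ u₂ v₂ := h₂
  have hempty : (∅ : Finset X) ∈ {F : Finset X | F.card ≤ 1} := by simp
  have hsingleton (y : X) : {y} ∈ {F : Finset X | F.card ≤ 1} := by simp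
  have : Nonempty X := Fintype.card_pos_iff.mp (by omega)
  have hU₁ : 0 < ∑ z, u₁ z := sum_pos (fun z _ ↦ hu₁ z) univ_nonempty
  have hU₂ : 0 < ∑ z, u₂ z := sum_pos (fun z _ ↦ hu₂ z) univ_nonempty
  refine ⟨(∑ z, u₁ z) / ∑ z, u₂ z, div_pos hU₁ hU₂, fun x ↦ ?_, fun y ↦ ?_⟩
  · refine eq_div_mul_of_div_eq_div hU₁.ne' ?_
    rw [rep₁.div_sum_eq hempty, rep₂.div_sum_eq hempty]
  · obtain ⟨x, hxy⟩ := Fintype.exists_ne_of_one_lt_card hX y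
    refine eq_div_mul_of_div_eq_div hU₁.ne' ?_
    rw [rep₁.div_sum_eq_sub_one hempty (hsingleton y) hu₁ (hv₁ y) hxy,
      rep₂.div_sum_eq_sub_one hempty (hsingleton y) hu₂ (hv₂ y) hxy]

/-- Uniqueness of F-Luce: two representations of the same strictly positive
choice rule on a domain containing the empty frame and all singleton frames
coincide up to a positive scaling factor. -/
theorem fLuce_uniqueness {X : Type*} [Fintype X] [DecidableEq X]
    (hX : 2 ≤ Fintype.card X)
    (ρ : X → Finset X → ℝ) (hpos : ∀ (x : X) (F : Finset X), 0 < ρ x F)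
    (u₁ v₁ u₂ v₂ : X → ℝ)
    (hu₁ : ∀ x, 0 < u₁ x) (hv₁ : ∀ x, 0 ≤ v₁ x)
    (hu₂ : ∀ x, 0 < u₂ x) (hv₂ : ∀ x, 0 ≤ v₂ x)
    (h₁ : ∀ (F : Finset X), F.card ≤ 1 → ∀ x : X,
      ρ x F = (u₁ x + if x ∈ F then v₁ x else 0) / ((∑ z, u₁ z) + ∑ z ∈ F, v₁ z))
    (h₂ : ∀ (F : Finset X), F.card ≤ 1 → ∀ x : X,
      ρ x F = (u₂ x + if x ∈ F then v₂ x else 0) / ((∑ z, u₂ z) + ∑ z ∈ F, v₂ z)) :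
    ∃ α : ℝ, 0 < α ∧ (∀ x, u₁ x = α * u₂ x) ∧ (∀ x, v₁ x = α * v₂ x) :=
  fLuce_uniqueness_general hX ρ u₁ v₁ u₂ v₂ hu₁ hv₁ hu₂ hv₂ h₁ h₂
end

section
/- Suppose ρ is generated by an F-Luce model with parameters (u*, v*) on a domain containing ∅ and all singleton frames {x}. Define u(x) := ρ(x,∅) and v(x) := ρ(x,{x})·(1 − ρ(x,∅))/(1 − ρ(x,{x})) − ρ(x,∅) for each x ∈ X. Then (u, v) is an F-Luce representation of ρ, and in fact u = u*/u*(X) and v = v*/u*(X). -/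
open Finset

/-! An F-Luce representation survives a common positive rescaling of `(u, v)`, and the scale is
fixed by `∑ u = 1`. On the frames `∅` and `{x}` the model reads `ρ(x,∅) = u x / S` and
`ρ(x,{x}) = (u x + v x) / (S + v x)` with `S = ∑ u`; solving this pair for `u x / S` and
`v x / S` gives the formulas of the theorem, the denominator `1 - ρ(x,{x}) = (S - u x) / (S + v x)`
being nonzero exactly because `ρ(x,{x}) < 1`. -/

namespace IsFLuce

variable {X : Type*} [Fintype X] [DecidableEq X] {ρ : X → Finset X → ℝ} {u v : X → ℝ}

theorem sum_pos (h : IsFLuce ρ u v) (x : X) : 0 < ∑ z, u z :=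
  (h.1 x).trans_le (single_le_sum (fun z _ => (h.1 z).le) (mem_univ x))

theorem div_const (h : IsFLuce ρ u v) {c : ℝ} (hc : 0 < c) :
    IsFLuce ρ (fun x => u x / c) (fun x => v x / c) := by
  obtain ⟨hu, hv, hρ⟩ := h
  refine ⟨fun x => div_pos (hu x) hc, fun x => div_nonneg (hv x) hc.le, fun F x => ?_⟩
  rw [hρ, ← sum_div, ← sum_div, ← add_div]
  split_ifs
  · field_simp
  · simp [div_div_div_cancel_right₀ hc.ne']

theorem normalize (h : IsFLuce ρ u v) :
    IsFLuce ρ (fun x => u x / ∑ z, u z) (fun x => v x / ∑ z, u z) := by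
  rcases isEmpty_or_nonempty X with hX | ⟨⟨x⟩⟩
  · exact ⟨isEmptyElim, isEmptyElim, fun _ => isEmptyElim⟩
  · exact h.div_const (h.sum_pos x)

theorem rho_empty (h : IsFLuce ρ u v) (x : X) : ρ x ∅ = u x / ∑ z, u z := by
  simp [h.2.2]

theorem rho_singleton (h : IsFLuce ρ u v) (x : X) :
    ρ x {x} = (u x + v x) / ((∑ z, u z) + v x) := by
  simp [h.2.2]

theorem lt_sum_of_rho_singleton_lt_one (h : IsFLuce ρ u v) {x : X} (hx : ρ x {x} < 1) :
    u x < ∑ z, u z := by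
  have hden : 0 < (∑ z, u z) + v x := add_pos_of_pos_of_nonneg (h.sum_pos x) (h.2.1 x)
  rw [h.rho_singleton, div_lt_one hden] at hx
  linarith

theorem v_div_sum_eq (h : IsFLuce ρ u v) {x : X} (hx : ρ x {x} < 1) :
    v x / ∑ z, u z = ρ x {x} * (1 - ρ x ∅) / (1 - ρ x {x}) - ρ x ∅ := by
  have hgap : (∑ z, u z) - u x ≠ 0 := (sub_pos.2 (h.lt_sum_of_rho_singleton_lt_one hx)).ne'
  have hden : (∑ z, u z) + v x ≠ 0 :=
    (add_pos_of_pos_of_nonneg (h.sum_pos x) (h.2.1 x)).ne'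
  have hS : (∑ z, u z) ≠ 0 := (h.sum_pos x).ne'
  have hcompl : 1 - ρ x {x} = ((∑ z, u z) - u x) / ((∑ z, u z) + v x) := by
    rw [h.rho_singleton]
    field_simp
    ring
  rw [hcompl, h.rho_singleton, h.rho_empty]
  field_simp
  ring

end IsFLuce

theorem fLuce_identification_singletons_general {X : Type*} [Fintype X] [DecidableEq X]
    (ρ : X → Finset X → ℝ) (u' v' : X → ℝ) (hrep : IsFLuce ρ u' v')
    (hlt : ∀ x : X, ρ x {x} < 1)
    (u v : X → ℝ)
    (hu : ∀ x, u x = ρ x ∅)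
    (hv : ∀ x, v x = ρ x {x} * (1 - ρ x ∅) / (1 - ρ x {x}) - ρ x ∅) :
    IsFLuce ρ u v ∧
      (∀ x, u x = u' x / ∑ z, u' z) ∧ (∀ x, v x = v' x / ∑ z, u' z) := by
  have hu_eq : ∀ x, u x = u' x / ∑ z, u' z := fun x => (hu x).trans (hrep.rho_empty x)
  have hv_eq : ∀ x, v x = v' x / ∑ z, u' z :=
    fun x => (hv x).trans (hrep.v_div_sum_eq (hlt x)).symm
  refine ⟨?_, hu_eq, hv_eq⟩
  rw [funext hu_eq, funext hv_eq]
  exact hrep.normalize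

/-- Identification of F-Luce from the empty frame and singleton frames:
`u(x) := ρ(x,∅)` and `v(x) := ρ(x,{x})·(1−ρ(x,∅))/(1−ρ(x,{x})) − ρ(x,∅)`
give an F-Luce representation of `ρ`, equal to the rescaled true parameters. -/
theorem fLuce_identification_singletons {X : Type*} [Fintype X] [DecidableEq X]
    (hX : 2 ≤ Fintype.card X)
    (ρ : X → Finset X → ℝ) (u' v' : X → ℝ) (hrep : IsFLuce ρ u' v')
    (hpos : ∀ (x : X) (F : Finset X), 0 < ρ x F)
    (hlt : ∀ x : X, ρ x {x} < 1)
    (u v : X → ℝ)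
    (hu : ∀ x, u x = ρ x ∅)
    (hv : ∀ x, v x = ρ x {x} * (1 - ρ x ∅) / (1 - ρ x {x}) - ρ x ∅) :
    IsFLuce ρ u v ∧
      (∀ x, u x = u' x / ∑ z, u' z) ∧ (∀ x, v x = v' x / ∑ z, u' z) :=
  fLuce_identification_singletons_general ρ u' v' hrep hlt u v hu hv
end
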